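/- arXiv:0712.4002 — 4 statements merged into one kernel-verified Lean document; each statement's English description precedes it below -/
import Mathlib

section
/- For every integer q with |q| ≥ 2, the value F₁(1/q) = Σ_{n=0}^∞ (1/q)^{2n(n+1)} / ∏_{k=1}^{n+1} (1 − (1/q)^{2k−1}) is irrational; i.e., the fifth-order mock theta function F₁ takes an irrational value at each point ±1/2, ±1/3, ±1/4, … . -/
namespace MockF1

/-- The `n`-th term of the series for `F₁(1/q)`. -/
noncomputable def u (q : ℤ) (n : ℕ) : ℝ :=
  (1 / (q : ℝ)) ^ (2 * n * (n + 1)) /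
    ∏ k ∈ Finset.range (n + 1), (1 - (1 / (q : ℝ)) ^ (2 * k + 1))

/-- Integer denominator product `D_n = ∏_{k=0}^{n} (q^{2k+1} - 1)`. -/
def D (q : ℤ) (n : ℕ) : ℤ := ∏ k ∈ Finset.range (n + 1), (q ^ (2 * k + 1) - 1)

section Main

variable {q : ℤ} (hq : 2 ≤ |q|)
include hq

lemma habs : (2 : ℝ) ≤ |(q : ℝ)| := by
  have := hq
  rw [← Int.cast_abs]
  exact_mod_cast this

lemma hq0 : (q : ℝ) ≠ 0 := by
  have h := habs hq
  intro h0; rw [h0] at h; simp at h; linarith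

omit hq in
lemma sum_odd (m : ℕ) : ∑ k ∈ Finset.range m, (2 * k + 1) = m ^ 2 := by
  induction m with
  | zero => simp
  | succ n ih => rw [Finset.sum_range_succ, ih]; ring

/-- lower bound on factors -/
lemma fac_lb (k : ℕ) : |(q : ℝ)| ^ (2 * k + 1) / 2 ≤ |(q : ℝ) ^ (2 * k + 1) - 1| := by
  have h2 : (2 : ℝ) ≤ |(q : ℝ)| ^ (2 * k + 1) := by
    calc (2:ℝ) = 2 ^ 1 := by norm_num
    _ ≤ 2 ^ (2 * k + 1) := by
        apply pow_le_pow_right₀ (by norm_num); omega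
    _ ≤ |(q : ℝ)| ^ (2 * k + 1) := by
        apply pow_le_pow_left₀ (by norm_num) (habs hq)
  calc |(q : ℝ)| ^ (2 * k + 1) / 2 = |(q : ℝ)| ^ (2 * k + 1) - |(q : ℝ)| ^ (2 * k + 1) / 2 := by ring
  _ ≤ |(q : ℝ)| ^ (2 * k + 1) - 1 := by
      have : (1:ℝ) ≤ |(q : ℝ)| ^ (2 * k + 1) / 2 := by linarith
      linarith
  _ = |(q : ℝ) ^ (2 * k + 1)| - |(1:ℝ)| := by rw [abs_pow]; simp
  _ ≤ |(q : ℝ) ^ (2 * k + 1) - 1| := abs_sub_abs_le_abs_sub _ _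

lemma fac_ub (k : ℕ) : |(q : ℝ) ^ (2 * k + 1) - 1| ≤ 2 * |(q : ℝ)| ^ (2 * k + 1) := by
  have h1 : (1:ℝ) ≤ |(q : ℝ)| ^ (2 * k + 1) :=
    one_le_pow₀ (by have := habs hq; linarith)
  calc |(q : ℝ) ^ (2 * k + 1) - 1| ≤ |(q : ℝ) ^ (2 * k + 1)| + |(1:ℝ)| := abs_sub _ _
  _ = |(q : ℝ)| ^ (2 * k + 1) + 1 := by rw [abs_pow]; simp
  _ ≤ 2 * |(q : ℝ)| ^ (2 * k + 1) := by linarith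

omit hq in
lemma D_cast (n : ℕ) :
    ((D q n : ℤ) : ℝ) = ∏ k ∈ Finset.range (n + 1), ((q : ℝ) ^ (2 * k + 1) - 1) := by
  simp only [D]; push_cast; ring

lemma D_lb (n : ℕ) :
    |(q : ℝ)| ^ ((n + 1) ^ 2) / 2 ^ (n + 1) ≤ |((D q n : ℤ) : ℝ)| := by
  rw [D_cast, Finset.abs_prod]
  calc |(q : ℝ)| ^ ((n + 1) ^ 2) / 2 ^ (n + 1)
      = ∏ k ∈ Finset.range (n + 1), (|(q : ℝ)| ^ (2 * k + 1) / 2) := by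
        rw [Finset.prod_div_distrib, Finset.prod_pow_eq_pow_sum, sum_odd]
        simp
  _ ≤ ∏ k ∈ Finset.range (n + 1), |(q : ℝ) ^ (2 * k + 1) - 1| := by
        apply Finset.prod_le_prod
        · intro k _; positivity
        · intro k _; exact fac_lb hq k

lemma D_ub (n : ℕ) :
    |((D q n : ℤ) : ℝ)| ≤ 2 ^ (n + 1) * |(q : ℝ)| ^ ((n + 1) ^ 2) := by
  rw [D_cast, Finset.abs_prod]
  calc ∏ k ∈ Finset.range (n + 1), |(q : ℝ) ^ (2 * k + 1) - 1|
      ≤ ∏ k ∈ Finset.range (n + 1), (2 * |(q : ℝ)| ^ (2 * k + 1)) := by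
        apply Finset.prod_le_prod
        · intro k _; positivity
        · intro k _; exact fac_ub hq k
  _ = 2 ^ (n + 1) * |(q : ℝ)| ^ ((n + 1) ^ 2) := by
        rw [Finset.prod_mul_distrib, Finset.prod_pow_eq_pow_sum, sum_odd]
        simp

lemma D_ne (n : ℕ) : ((D q n : ℤ) : ℝ) ≠ 0 := by
  have h := D_lb hq n
  have hpos : (0:ℝ) < |(q : ℝ)| ^ ((n + 1) ^ 2) / 2 ^ (n + 1) := by
    have := habs hq; positivity
  intro h0
  rw [h0] at h; simp at h; linarith

lemma prod_eq (n : ℕ) :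
    ∏ k ∈ Finset.range (n + 1), (1 - (1 / (q : ℝ)) ^ (2 * k + 1))
      = ((D q n : ℤ) : ℝ) / (q : ℝ) ^ ((n + 1) ^ 2) := by
  have hq' := hq0 hq
  rw [D_cast, eq_div_iff (pow_ne_zero _ hq'), ← sum_odd (n+1),
    ← Finset.prod_pow_eq_pow_sum, ← Finset.prod_mul_distrib]
  apply Finset.prod_congr rfl
  intro k _
  field_simp
  rw [one_div, inv_pow, sub_mul, inv_mul_cancel₀ (pow_ne_zero _ hq'), one_mul]

/-- Key closed form: `u n = q / (D n * q^{n²})`. -/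
lemma u_eq (n : ℕ) : u q n = (q : ℝ) / (((D q n : ℤ) : ℝ) * (q : ℝ) ^ (n ^ 2)) := by
  have hD := D_ne hq n
  have hq' := hq0 hq
  rw [u, prod_eq hq]
  rw [div_div_eq_mul_div, div_eq_div_iff hD (by positivity)]
  rw [one_div, inv_pow, inv_mul_eq_div, div_mul_eq_mul_div,
    div_eq_iff (pow_ne_zero _ hq')]
  have h : (n + 1) ^ 2 + n ^ 2 = 2 * n * (n + 1) + 1 := by ring
  calc (q:ℝ) ^ ((n + 1) ^ 2) * (((D q n : ℤ):ℝ) * (q:ℝ) ^ (n ^ 2))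
      = (q:ℝ) ^ ((n + 1) ^ 2 + n ^ 2) * ((D q n : ℤ):ℝ) := by rw [pow_add]; ring
  _ = (q:ℝ) ^ (2 * n * (n + 1) + 1) * ((D q n : ℤ):ℝ) := by rw [h]
  _ = (q:ℝ) * ((D q n : ℤ):ℝ) * (q:ℝ) ^ (2 * n * (n + 1)) := by rw [pow_succ]; ring

/-- Integer scaling factor `E_N = D_N * q^{N²}`. -/
def E (q : ℤ) (N : ℕ) : ℤ := D q N * q ^ (N ^ 2)

omit hq in
lemma E_cast (N : ℕ) : ((E q N : ℤ) : ℝ) = ((D q N : ℤ) : ℝ) * (q : ℝ) ^ (N ^ 2) := by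
  push_cast [E]; ring

lemma ht1 : (1:ℝ) ≤ |(q:ℝ)| := by have := habs hq; linarith

/-- crude geometric bound for summability -/
lemma u_abs_le (n : ℕ) : |u q n| ≤ 2 * (1/2 : ℝ) ^ n := by
  have ht := habs hq
  have ht1 := ht1 hq
  have hDlb := D_lb hq n
  have hDpos : (0:ℝ) < |(q:ℝ)| ^ ((n + 1) ^ 2) / 2 ^ (n + 1) := by positivity
  have h1 : |u q n| = |(q:ℝ)| / (|((D q n : ℤ):ℝ)| * |(q:ℝ)| ^ (n ^ 2)) := by
    rw [u_eq hq, abs_div, abs_mul, abs_pow]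
  have h2 : |u q n| ≤ |(q:ℝ)| / ((|(q:ℝ)| ^ ((n + 1) ^ 2) / 2 ^ (n + 1)) * |(q:ℝ)| ^ (n ^ 2)) := by
    rw [h1]
    apply div_le_div₀ (by positivity) le_rfl (by positivity)
    apply mul_le_mul_of_nonneg_right hDlb (by positivity)
  have h3 : |(q:ℝ)| / ((|(q:ℝ)| ^ ((n + 1) ^ 2) / 2 ^ (n + 1)) * |(q:ℝ)| ^ (n ^ 2))
      = 2 ^ (n + 1) / |(q:ℝ)| ^ (2 * n * (n + 1)) := by
    have hqpos : (0:ℝ) < |(q:ℝ)| := by linarith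
    have hpow : |(q:ℝ)| ^ ((n + 1) ^ 2) * |(q:ℝ)| ^ (n ^ 2)
        = |(q:ℝ)| ^ (2 * n * (n + 1)) * |(q:ℝ)| := by
      rw [← pow_add, ← pow_succ]; congr 1; ring
    field_simp
    rw [hpow]; ring
  have h4 : (2:ℝ) ^ (n + 1) / |(q:ℝ)| ^ (2 * n * (n + 1)) ≤ 2 ^ (n + 1) / 2 ^ (2 * n) := by
    apply div_le_div₀ (by positivity) le_rfl (by positivity)
    calc (2:ℝ) ^ (2 * n) ≤ 2 ^ (2 * n * (n + 1)) := by
          apply pow_le_pow_right₀ (by norm_num); nlinarith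
    _ ≤ |(q:ℝ)| ^ (2 * n * (n + 1)) := pow_le_pow_left₀ (by norm_num) ht _
  have h5 : (2:ℝ) ^ (n + 1) / 2 ^ (2 * n) = 2 * (1/2:ℝ) ^ n := by
    rw [div_pow, one_pow, pow_succ, two_mul n, pow_add]
    field_simp
  exact (h2.trans h3.le).trans (h4.trans h5.le)

lemma u_summable : Summable (u q) := by
  apply Summable.of_abs
  apply Summable.of_nonneg_of_le (fun n => abs_nonneg _) (u_abs_le hq)
  exact (summable_geometric_of_lt_one (by norm_num) (by norm_num)).mul_left 2

/-- closed form for the first tail term times `E_N`. -/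
lemma uE_succ (N : ℕ) :
    u q (N + 1) * ((E q N : ℤ) : ℝ)
      = (q : ℝ) / ((q : ℝ) ^ (2 * N + 1) * ((q : ℝ) ^ (2 * N + 3) - 1)) := by
  have hq' := hq0 hq
  have hfac : ((q:ℝ) ^ (2 * N + 3) - 1) ≠ 0 := by
    have := fac_lb hq (N + 1)
    have h2 : (0:ℝ) < |(q:ℝ)| ^ (2 * N + 3) / 2 := by
      have := ht1 hq; positivity
    intro h0
    rw [show 2 * (N+1) + 1 = 2 * N + 3 by ring, h0] at this
    simp at this; linarith
  have hD : (D q (N + 1) : ℝ) = (D q N : ℝ) * ((q:ℝ) ^ (2 * N + 3) - 1) := by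
    rw [D_cast, D_cast, Finset.prod_range_succ, show 2*(N+1)+1 = 2*N+3 from by ring]
  have hDn := D_ne hq N
  rw [u_eq hq, E_cast, hD]
  have hpow : (q:ℝ) ^ ((N + 1) ^ 2) = (q:ℝ) ^ (N ^ 2) * (q:ℝ) ^ (2 * N + 1) := by
    rw [← pow_add]; congr 1; ring
  rw [hpow]
  field_simp

/-- integrality of scaled initial terms -/
lemma uE_int (n N : ℕ) (h : n ≤ N) : ∃ c : ℤ, u q n * ((E q N : ℤ) : ℝ) = (c : ℝ) := by
  have hq' := hq0 hq
  have hDn := D_ne hq n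
  obtain ⟨m, hm⟩ : D q n ∣ D q N := by
    unfold D
    apply Finset.prod_dvd_prod_of_subset
    exact Finset.range_subset_range.2 (by omega)
  refine ⟨q ^ (N ^ 2 - n ^ 2 + 1) * m, ?_⟩
  have hn2 : n ^ 2 ≤ N ^ 2 := Nat.pow_le_pow_left h 2
  have hsplit : (q:ℝ) ^ (N ^ 2) = (q:ℝ) ^ (n ^ 2) * (q:ℝ) ^ (N ^ 2 - n ^ 2) := by
    rw [← pow_add]; congr 1; omega
  have hmc : ((D q N : ℤ) : ℝ) = ((D q n : ℤ) : ℝ) * ((m : ℤ) : ℝ) := by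
    rw [hm]; push_cast; ring
  rw [u_eq hq, E_cast, hmc, hsplit]
  push_cast
  field_simp
  ring

/-- The per-term bound for the far tail. -/
lemma uE_tail_bound (N n : ℕ) (h : N + 2 ≤ n) :
    |u q n * ((E q N : ℤ) : ℝ)|
      ≤ 1 / (8 * |(q:ℝ)| ^ (4 * N + 3)) * (1/2 : ℝ) ^ (n - (N + 2)) := by
  obtain ⟨m, rfl⟩ : ∃ m, n = N + 2 + m := ⟨n - (N + 2), by omega⟩
  set n := N + 2 + m with hn
  have ht := habs hq
  have ht1' := ht1 hq
  have ht0 : (0:ℝ) < |(q:ℝ)| := by linarith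
  set t := |(q:ℝ)| with htdef
  have hsub : n - (N + 2) = m := by omega
  rw [hsub]
  have key : ∀ c a b : ℕ, c + a ≤ b → (2:ℝ) ^ c * t ^ a ≤ t ^ b := by
    intro c a b hcab
    calc (2:ℝ) ^ c * t ^ a ≤ t ^ c * t ^ a :=
          mul_le_mul_of_nonneg_right (pow_le_pow_left₀ (by norm_num) ht c) (by positivity)
    _ = t ^ (c + a) := by rw [pow_add]
    _ ≤ t ^ b := pow_le_pow_right₀ ht1' hcab
  -- closed form of the absolute value
  have h1 : |u q n * ((E q N : ℤ) : ℝ)|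
      = t * (|((D q N : ℤ):ℝ)| * t ^ (N ^ 2)) / (|((D q n : ℤ):ℝ)| * t ^ (n ^ 2)) := by
    rw [u_eq hq, E_cast, abs_mul, abs_div, abs_mul, abs_mul, abs_pow, abs_pow]
    ring
  have hDNub := D_ub hq N
  have hDnlb := D_lb hq n
  have hDnpos : (0:ℝ) < t ^ ((n + 1) ^ 2) / 2 ^ (n + 1) := by positivity
  have h2 : |u q n * ((E q N : ℤ) : ℝ)|
      ≤ t * ((2 ^ (N + 1) * t ^ ((N + 1) ^ 2)) * t ^ (N ^ 2))
        / ((t ^ ((n + 1) ^ 2) / 2 ^ (n + 1)) * t ^ (n ^ 2)) := by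
    rw [h1]
    apply div_le_div₀ (by positivity)
    · apply mul_le_mul_of_nonneg_left _ (by positivity)
      exact mul_le_mul_of_nonneg_right hDNub (by positivity)
    · positivity
    · exact mul_le_mul_of_nonneg_right hDnlb (by positivity)
  have h3 : t * ((2 ^ (N + 1) * t ^ ((N + 1) ^ 2)) * t ^ (N ^ 2))
        / ((t ^ ((n + 1) ^ 2) / 2 ^ (n + 1)) * t ^ (n ^ 2))
      = 2 ^ (n + N + 2) * t ^ (1 + (N + 1) ^ 2 + N ^ 2) / t ^ ((n + 1) ^ 2 + n ^ 2) := by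
    rw [pow_add, pow_add, pow_add, pow_add, pow_add]
    field_simp
    ring
  have h4 : (2:ℝ) ^ (n + N + 2) * t ^ (1 + (N + 1) ^ 2 + N ^ 2) / t ^ ((n + 1) ^ 2 + n ^ 2)
      ≤ 1 / (8 * t ^ (4 * N + 3)) * (1/2 : ℝ) ^ m := by
    have h8 : 1 / (8 * t ^ (4 * N + 3)) * (1/2 : ℝ) ^ m
        = 1 / (2 ^ (m + 3) * t ^ (4 * N + 3)) := by
      rw [div_pow, one_pow, pow_add]
      norm_num
      ring
    rw [h8, div_le_div_iff₀ (by positivity) (by positivity), one_mul]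
    calc 2 ^ (n + N + 2) * t ^ (1 + (N + 1) ^ 2 + N ^ 2) * (2 ^ (m + 3) * t ^ (4 * N + 3))
        = 2 ^ ((n + N + 2) + (m + 3)) * t ^ ((1 + (N + 1) ^ 2 + N ^ 2) + (4 * N + 3)) := by
          rw [pow_add, pow_add]; ring
    _ ≤ t ^ ((n + 1) ^ 2 + n ^ 2) := by
        apply key
        have : (n + 1) ^ 2 + n ^ 2
            = (((n + N + 2) + (m + 3)) + ((1 + (N + 1) ^ 2 + N ^ 2) + (4 * N + 3)))
              + (1 + 2 * N + m * (4 * N + 8) + 2 * m ^ 2) := by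
          rw [hn]; ring
        omega
  exact (h2.trans h3.le).trans h4

/-- integrality of the scaled partial sums -/
lemma sum_uE_int (N M : ℕ) (h : M ≤ N + 1) :
    ∃ C : ℤ, (∑ i ∈ Finset.range M, u q i) * ((E q N : ℤ) : ℝ) = (C : ℝ) := by
  induction M with
  | zero => exact ⟨0, by simp⟩
  | succ M ih =>
    obtain ⟨C, hC⟩ := ih (by omega)
    obtain ⟨c, hc⟩ := uE_int hq M N (by omega)
    exact ⟨C + c, by rw [Finset.sum_range_succ, add_mul, hC, hc]; push_cast; ring⟩

/-- lower bound for the first tail term -/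
lemma uE_succ_lb (N : ℕ) :
    1 / (2 * |(q:ℝ)| ^ (4 * N + 3)) ≤ |u q (N + 1) * ((E q N : ℤ) : ℝ)| := by
  have ht := habs hq
  have ht0 : (0:ℝ) < |(q:ℝ)| := by linarith
  rw [uE_succ hq, abs_div, abs_mul, abs_pow]
  have hfac : |(q:ℝ) ^ (2 * N + 3) - 1| ≤ 2 * |(q:ℝ)| ^ (2 * N + 3) := by
    have := fac_ub hq (N + 1)
    rwa [show 2 * (N + 1) + 1 = 2 * N + 3 from by ring] at this
  have hfacpos : (0:ℝ) < |(q:ℝ) ^ (2 * N + 3) - 1| := by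
    have := fac_lb hq (N + 1)
    rw [show 2 * (N + 1) + 1 = 2 * N + 3 from by ring] at this
    have : (0:ℝ) < |(q:ℝ)| ^ (2 * N + 3) / 2 := by positivity
    linarith [fac_lb hq (N + 1),
      (show 2 * (N + 1) + 1 = 2 * N + 3 from by ring) ▸ fac_lb hq (N + 1)]
  calc 1 / (2 * |(q:ℝ)| ^ (4 * N + 3))
      = |(q:ℝ)| / (|(q:ℝ)| ^ (2 * N + 1) * (2 * |(q:ℝ)| ^ (2 * N + 3))) := by
        rw [show 4 * N + 3 = (2 * N + 1) + (2 * N + 3) - 1 from by omega]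
        rw [show (2*N+1) + (2*N+3) - 1 = 2*N + (2*N+3) from by omega]
        rw [pow_add, show 2 * N + 1 = 2 * N + 1 from rfl]
        rw [pow_succ]
        field_simp
        ring
  _ ≤ |(q:ℝ)| / (|(q:ℝ)| ^ (2 * N + 1) * |(q:ℝ) ^ (2 * N + 3) - 1|) := by
        apply div_le_div₀ (by positivity) le_rfl (by positivity)
        exact mul_le_mul_of_nonneg_left hfac (by positivity)

/-- upper bound for the first tail term -/
lemma uE_succ_ub (N : ℕ) :
    |u q (N + 1) * ((E q N : ℤ) : ℝ)| ≤ 2 / |(q:ℝ)| ^ (4 * N + 3) := by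
  have ht := habs hq
  have ht0 : (0:ℝ) < |(q:ℝ)| := by linarith
  rw [uE_succ hq, abs_div, abs_mul, abs_pow]
  have hfac : |(q:ℝ)| ^ (2 * N + 3) / 2 ≤ |(q:ℝ) ^ (2 * N + 3) - 1| := by
    have := fac_lb hq (N + 1)
    rwa [show 2 * (N + 1) + 1 = 2 * N + 3 from by ring] at this
  calc |(q:ℝ)| / (|(q:ℝ)| ^ (2 * N + 1) * |(q:ℝ) ^ (2 * N + 3) - 1|)
      ≤ |(q:ℝ)| / (|(q:ℝ)| ^ (2 * N + 1) * (|(q:ℝ)| ^ (2 * N + 3) / 2)) := by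
        apply div_le_div₀ (by positivity) le_rfl (by positivity)
        exact mul_le_mul_of_nonneg_left hfac (by positivity)
  _ = 2 / |(q:ℝ)| ^ (4 * N + 3) := by
        have e : |(q:ℝ)| ^ (2 * N + 1) * |(q:ℝ)| ^ (2 * N + 3)
            = |(q:ℝ)| * |(q:ℝ)| ^ (4 * N + 3) := by
          rw [← pow_add, ← pow_succ']
          congr 1
          omega
        rw [show |(q:ℝ)| ^ (2*N+1) * (|(q:ℝ)| ^ (2*N+3) / 2)
            = (|(q:ℝ)| * |(q:ℝ)| ^ (4*N+3)) / 2 from by rw [← e]; ring]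
        rw [div_div_eq_mul_div, div_eq_div_iff (by positivity) (by positivity)]
        ring

end Main

end MockF1

set_option maxHeartbeats 1000000 in
/-- The fifth-order mock theta function
`F₁(x) = Σ_{n=0}^∞ x^{2n(n+1)} / ∏_{k=1}^{n+1} (1 - x^{2k-1})`
takes an irrational value at `x = 1/q` for every integer `q` with `|q| ≥ 2`. -/
theorem mock_theta_F1_irrational (q : ℤ) (hq : 2 ≤ |q|) :
    Irrational (∑' n : ℕ,
      (1 / (q : ℝ)) ^ (2 * n * (n + 1)) /
        ∏ k ∈ Finset.range (n + 1), (1 - (1 / (q : ℝ)) ^ (2 * k + 1))) := by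
  open MockF1 in
  rintro ⟨r, hr⟩
  have ht : (2:ℝ) ≤ |(q:ℝ)| := habs hq
  have ht0 : (0:ℝ) < |(q:ℝ)| := by linarith
  have hu : Summable (u q) := u_summable hq
  have hr' : (r : ℝ) = ∑' n, u q n := hr
  set N := r.den with hN
  have hdpos : 0 < r.den := r.pos
  set Ec : ℝ := ((E q N : ℤ) : ℝ) with hEc
  -- split off the first N+1 terms
  have hsplit := Summable.sum_add_tsum_nat_add (N+1) hu
  set T : ℝ := ∑' i, u q (i + (N+1)) with hTdef
  have hTeq : T = (r : ℝ) - ∑ i ∈ Finset.range (N+1), u q i := by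
    rw [hr']; linarith [hsplit]
  -- express T * Ec
  have hgsum : Summable (fun i => u q (i + (N+1)) * Ec) :=
    (summable_nat_add_iff (N+1)).2 (hu.mul_right _)
  have hTE : T * Ec = ∑' i, u q (i + (N+1)) * Ec := (tsum_mul_right).symm
  have hshift := Summable.sum_add_tsum_nat_add 1 hgsum
  have hidx : (fun i => u q (i + 1 + (N+1)) * Ec) = (fun i => u q (i + (N+2)) * Ec) := by
    funext i
    congr 2
    omega
  set R : ℝ := ∑' i, u q (i + (N+2)) * Ec with hRdef
  have hTE2 : T * Ec = u q (N+1) * Ec + R := by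
    rw [hTE, ← hshift, hidx]
    simp
    exact hRdef.symm
  -- bound |R|
  have hRsum : Summable (fun i => |u q (i + (N+2)) * Ec|) :=
    ((summable_nat_add_iff (N+2)).2 (hu.mul_right _)).abs
  have hgeosum : Summable (fun i : ℕ => 1 / (8 * |(q:ℝ)| ^ (4*N+3)) * (1/2:ℝ) ^ i) :=
    (summable_geometric_of_lt_one (by norm_num) (by norm_num)).mul_left _
  have hRterm : ∀ i : ℕ, |u q (i + (N+2)) * Ec| ≤ 1 / (8 * |(q:ℝ)| ^ (4*N+3)) * (1/2:ℝ) ^ i := by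
    intro i
    have := uE_tail_bound hq N (i + (N+2)) (by omega)
    rwa [show i + (N+2) - (N+2) = i from by omega] at this
  have hR1 : |R| ≤ ∑' i, |u q (i + (N+2)) * Ec| := by
    rw [hRdef]
    have h := norm_tsum_le_tsum_norm (f := fun i => u q (i + (N+2)) * Ec)
      (by simpa only [Real.norm_eq_abs] using hRsum)
    simpa only [Real.norm_eq_abs] using h
  have hR2 : ∑' i, |u q (i + (N+2)) * Ec| ≤ 1 / (4 * |(q:ℝ)| ^ (4*N+3)) := by
    calc ∑' i, |u q (i + (N+2)) * Ec|
        ≤ ∑' i : ℕ, 1 / (8 * |(q:ℝ)| ^ (4*N+3)) * (1/2:ℝ) ^ i :=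
          Summable.tsum_le_tsum hRterm hRsum hgeosum
    _ = 1 / (8 * |(q:ℝ)| ^ (4*N+3)) * (1 - 1/2)⁻¹ := by
          rw [tsum_mul_left, tsum_geometric_of_lt_one (by norm_num) (by norm_num)]
    _ = 1 / (4 * |(q:ℝ)| ^ (4*N+3)) := by
          rw [show ((1:ℝ) - 1/2)⁻¹ = 2 from by norm_num]
          field_simp
          ring
  have hRb : |R| ≤ 1 / (4 * |(q:ℝ)| ^ (4*N+3)) := hR1.trans hR2
  -- lower and upper bounds for |T * Ec|
  have hlb0 := uE_succ_lb hq N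
  have hub0 := uE_succ_ub hq N
  have hquarter : 1 / (4 * |(q:ℝ)| ^ (4*N+3)) ≤ |T * Ec| := by
    have h1 : |u q (N+1) * Ec| - |R| ≤ |T * Ec| := by
      rw [hTE2]
      have := abs_add_le (u q (N+1) * Ec + R) (-R)
      simp only [add_neg_cancel_right, abs_neg] at this
      linarith
    have h2 : 1 / (2 * |(q:ℝ)| ^ (4*N+3)) - 1 / (4 * |(q:ℝ)| ^ (4*N+3))
        = 1 / (4 * |(q:ℝ)| ^ (4*N+3)) := by
      field_simp
      ring
    linarith
  have hTEpos : 0 < |T * Ec| := by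
    have : (0:ℝ) < 1 / (4 * |(q:ℝ)| ^ (4*N+3)) := by positivity
    linarith
  have hTEub : |T * Ec| ≤ 3 / |(q:ℝ)| ^ (4*N+3) := by
    have h1 : |T * Ec| ≤ |u q (N+1) * Ec| + |R| := by rw [hTE2]; exact abs_add_le _ _
    have h2 : 1 / (4 * |(q:ℝ)| ^ (4*N+3)) ≤ 1 / |(q:ℝ)| ^ (4*N+3) := by
      apply div_le_div₀ (by norm_num) le_rfl (by positivity)
      nlinarith [pow_pos ht0 (4*N+3)]
    have h3 : 2 / |(q:ℝ)| ^ (4*N+3) + 1 / |(q:ℝ)| ^ (4*N+3) = 3 / |(q:ℝ)| ^ (4*N+3) := by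
      ring
    linarith
  -- integrality
  obtain ⟨C, hC⟩ := sum_uE_int hq N (N+1) le_rfl
  have hrval : (r : ℝ) * (r.den : ℝ) = (r.num : ℝ) := by
    rw [Rat.cast_def]
    field_simp
  set Z : ℤ := r.num * E q N - (r.den : ℤ) * C with hZdef
  have hZ : (Z : ℝ) = (r.den : ℝ) * (T * Ec) := by
    rw [hTeq]
    push_cast [hZdef]
    rw [← hEc]
    linear_combination (-Ec) * hrval + (r.den : ℝ) * hC
  -- Z is a nonzero integer of absolute value < 1 : contradiction
  have hZne : Z ≠ 0 := by
    intro h0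
    rw [h0] at hZ
    simp only [Int.cast_zero] at hZ
    have hd0 : (0:ℝ) < (r.den : ℝ) := by exact_mod_cast hdpos
    have hTE0 : T * Ec = 0 := by
      rcases mul_eq_zero.1 hZ.symm with h | h
      · exact absurd h (ne_of_gt hd0)
      · exact h
    rw [hTE0, abs_zero] at hTEpos
    exact lt_irrefl _ hTEpos
  have hZ1 : (1:ℝ) ≤ |(Z:ℝ)| := by
    have := Int.one_le_abs hZne
    calc (1:ℝ) = ((1:ℤ):ℝ) := by norm_num
    _ ≤ ((|Z|:ℤ):ℝ) := by exact_mod_cast this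
    _ = |(Z:ℝ)| := by push_cast; ring
  have hZlt : |(Z:ℝ)| < 1 := by
    rw [hZ, abs_mul, abs_of_nonneg (by positivity : (0:ℝ) ≤ (r.den:ℝ))]
    have hden : (r.den : ℝ) < 2 ^ N := by
      have := Nat.lt_two_pow_self (n := N)
      exact_mod_cast (hN ▸ this)
    have hpow : (2:ℝ) ^ (4*N+3) ≤ |(q:ℝ)| ^ (4*N+3) := pow_le_pow_left₀ (by norm_num) ht _
    calc (r.den : ℝ) * |T * Ec| ≤ (r.den : ℝ) * (3 / |(q:ℝ)| ^ (4*N+3)) := by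
          apply mul_le_mul_of_nonneg_left hTEub (by positivity)
    _ ≤ (r.den : ℝ) * (3 / 2 ^ (4*N+3)) := by
          apply mul_le_mul_of_nonneg_left _ (by positivity)
          apply div_le_div₀ (by norm_num) le_rfl (by positivity) hpow
    _ < 1 := by
          rw [mul_div_assoc']
          rw [div_lt_one (by positivity)]
          calc (r.den : ℝ) * 3 < 2 ^ N * 3 := by nlinarith
          _ ≤ 2 ^ (4*N+3) := by
              rw [show 4*N+3 = N + (3*N+3) from by omega, pow_add]
              have h1 : (3:ℝ) ≤ 2 ^ (3*N+3) := by
                calc (3:ℝ) ≤ 2 ^ 2 := by norm_num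
                _ ≤ 2 ^ (3*N+3) := pow_le_pow_right₀ (by norm_num) (by omega)
              nlinarith [pow_pos (show (0:ℝ) < 2 from by norm_num) N]
  linarith
end

section
/- For every integer q with |q| ≥ 2, the value Φ(1/q) = −1 + Σ_{n=0}^∞ (1/q)^{5n²} / ( ∏_{j=0}^{n} (1 − (1/q)^{5j+1}) · ∏_{j=0}^{n−1} (1 − (1/q)^{5j+4}) ) is irrational; i.e., the fifth-order mock theta function Φ takes an irrational value at each point ±1/2, ±1/3, ±1/4, … . -/
namespace MockAux

noncomputable def tt (q : ℤ) (n : ℕ) : ℝ :=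
  (1 / (q : ℝ)) ^ (5 * n ^ 2) /
    ((∏ j ∈ Finset.range (n + 1), (1 - (1 / (q : ℝ)) ^ (5 * j + 1))) *
      ∏ j ∈ Finset.range n, (1 - (1 / (q : ℝ)) ^ (5 * j + 4)))

def cc (q : ℤ) (n : ℕ) : ℤ :=
  (∏ j ∈ Finset.range (n + 1), (q ^ (5 * j + 1) - 1)) *
    ∏ j ∈ Finset.range n, (q ^ (5 * j + 4) - 1)

variable {q : ℤ} (hq : 2 ≤ |q|)
include hq

lemma hq2 : (2 : ℝ) ≤ |(q : ℝ)| := by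
  have := hq; rw [← Int.cast_abs]; exact_mod_cast this

lemma hq0 : (q : ℝ) ≠ 0 := by
  have h := hq2 hq
  intro h0; rw [h0] at h; norm_num at h

lemma Ybound : |1 / (q : ℝ)| ≤ 1 / 2 := by
  rw [abs_div, abs_one]
  rw [div_le_div_iff₀ (lt_of_lt_of_le two_pos (hq2 hq)) two_pos]
  linarith [hq2 hq]

lemma Ypos : 0 < |1 / (q : ℝ)| := by
  rw [abs_pos]
  simp [hq0 hq]

lemma factor_abs (k : ℕ) (hk : 1 ≤ k) : |(1 / (q : ℝ)) ^ k| ≤ 1 / 2 := by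
  rw [abs_pow]
  calc |1 / (q : ℝ)| ^ k ≤ (1/2 : ℝ) ^ k :=
        pow_le_pow_left₀ (abs_nonneg _) (Ybound hq) k
    _ ≤ (1/2 : ℝ) ^ 1 := pow_le_pow_of_le_one (by norm_num) (by norm_num) hk
    _ = 1/2 := by norm_num

lemma factor_lb (k : ℕ) (hk : 1 ≤ k) : 1/2 ≤ 1 - (1 / (q : ℝ)) ^ k := by
  have := abs_le.1 (factor_abs hq k hk); linarith [this.2]

lemma factor_ub (k : ℕ) (hk : 1 ≤ k) : 1 - (1 / (q : ℝ)) ^ k ≤ 2 := by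
  have := abs_le.1 (factor_abs hq k hk); linarith [this.1]

lemma prod_lb (m : ℕ) (e : ℕ → ℕ) (he : ∀ j, 1 ≤ e j) :
    (1/2 : ℝ) ^ m ≤ ∏ j ∈ Finset.range m, (1 - (1 / (q : ℝ)) ^ (e j)) := by
  calc (1/2 : ℝ) ^ m = ∏ _j ∈ Finset.range m, (1/2 : ℝ) := by
        rw [Finset.prod_const, Finset.card_range]
    _ ≤ _ := Finset.prod_le_prod (fun i _ => by norm_num)
        (fun i _ => factor_lb hq (e i) (he i))

lemma prod_ub (m : ℕ) (e : ℕ → ℕ) (he : ∀ j, 1 ≤ e j) :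
    ∏ j ∈ Finset.range m, (1 - (1 / (q : ℝ)) ^ (e j)) ≤ 2 ^ m := by
  calc ∏ j ∈ Finset.range m, (1 - (1 / (q : ℝ)) ^ (e j))
      ≤ ∏ _j ∈ Finset.range m, (2 : ℝ) :=
        Finset.prod_le_prod (fun i _ => le_trans (by norm_num) (factor_lb hq (e i) (he i)))
        (fun i _ => factor_ub hq (e i) (he i))
    _ = 2 ^ m := by rw [Finset.prod_const, Finset.card_range]

lemma prod_pos (m : ℕ) (e : ℕ → ℕ) (he : ∀ j, 1 ≤ e j) :
    0 < ∏ j ∈ Finset.range m, (1 - (1 / (q : ℝ)) ^ (e j)) :=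
  lt_of_lt_of_le (by positivity) (prod_lb hq m e he)


noncomputable def PP (q : ℤ) (n : ℕ) : ℝ :=
  (∏ j ∈ Finset.range (n + 1), (1 - (1 / (q : ℝ)) ^ (5 * j + 1))) *
    ∏ j ∈ Finset.range n, (1 - (1 / (q : ℝ)) ^ (5 * j + 4))

lemma PP_lb (n : ℕ) : (1/2 : ℝ) ^ (2*n+1) ≤ PP q n := by
  have h1 := prod_lb hq (n+1) (fun j => 5*j+1) (fun j => Nat.le_add_left 1 _)
  have h2 := prod_lb hq n (fun j => 5*j+4) (fun j => le_trans (by norm_num) (Nat.le_add_left 4 _))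
  have e : (2*n+1) = (n+1) + n := by omega
  rw [PP, e, pow_add]
  exact mul_le_mul h1 h2 (by positivity) (le_trans (by positivity) h1)

lemma PP_ub (n : ℕ) : PP q n ≤ 2 ^ (2*n+1) := by
  have h1 := prod_ub hq (n+1) (fun j => 5*j+1) (fun j => Nat.le_add_left 1 _)
  have h2 := prod_ub hq n (fun j => 5*j+4) (fun j => le_trans (by norm_num) (Nat.le_add_left 4 _))
  have g1 := prod_pos hq (n+1) (fun j => 5*j+1) (fun j => Nat.le_add_left 1 _)
  have g2 := prod_pos hq n (fun j => 5*j+4) (fun j => le_trans (by norm_num) (Nat.le_add_left 4 _))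
  have e : (2*n+1) = (n+1) + n := by omega
  rw [PP, e, pow_add]
  exact mul_le_mul h1 h2 (le_of_lt g2) (by positivity)

lemma PP_pos (n : ℕ) : 0 < PP q n :=
  lt_of_lt_of_le (by positivity) (PP_lb hq n)

omit hq in
lemma tt_eq_PP (n : ℕ) : tt q n = (1 / (q : ℝ)) ^ (5 * n ^ 2) / PP q n := rfl

lemma tt_abs (n : ℕ) : |tt q n| = |1 / (q : ℝ)| ^ (5 * n ^ 2) / PP q n := by
  rw [tt_eq_PP, abs_div, abs_pow, abs_of_pos (PP_pos hq n)]

lemma tt_ub (n : ℕ) : |tt q n| ≤ |1 / (q : ℝ)| ^ (5 * n ^ 2) * 2 ^ (2*n+1) := by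
  rw [tt_abs hq n, div_le_iff₀ (PP_pos hq n)]
  have h := PP_lb hq n
  have hY : (0:ℝ) ≤ |1 / (q : ℝ)| ^ (5 * n ^ 2) := by positivity
  have hc : (1:ℝ) ≤ 2 ^ (2*n+1) * PP q n := by
    calc (1:ℝ) = 2 ^ (2*n+1) * (1/2)^(2*n+1) := by
          rw [← mul_pow]; norm_num
      _ ≤ 2 ^ (2*n+1) * PP q n := by
          apply mul_le_mul_of_nonneg_left h (by positivity)
  nlinarith
lemma tt_lb (n : ℕ) : |1 / (q : ℝ)| ^ (5 * n ^ 2) * (1/2) ^ (2*n+1) ≤ |tt q n| := by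
  rw [tt_abs hq n, le_div_iff₀ (PP_pos hq n)]
  have h := PP_ub hq n
  have hY : (0:ℝ) ≤ |1 / (q : ℝ)| ^ (5 * n ^ 2) := by positivity
  have hc : (1/2:ℝ)^(2*n+1) * PP q n ≤ 1 := by
    calc (1/2:ℝ)^(2*n+1) * PP q n ≤ (1/2:ℝ)^(2*n+1) * 2 ^ (2*n+1) := by
          apply mul_le_mul_of_nonneg_left h (by positivity)
      _ = 1 := by rw [← mul_pow]; norm_num
  nlinarith

lemma tt_pos (n : ℕ) : 0 < |tt q n| := by
  have hY := Ypos hq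
  exact lt_of_lt_of_le (by positivity) (tt_lb hq n)


omit hq in
lemma prod_clear (h0 : (q:ℝ) ≠ 0) (m : ℕ) (e : ℕ → ℕ) :
    (∏ j ∈ Finset.range m, (1 - (1 / (q : ℝ)) ^ (e j))) * (q:ℝ) ^ (∑ j ∈ Finset.range m, e j)
      = ∏ j ∈ Finset.range m, ((q:ℝ) ^ (e j) - 1) := by
  rw [← Finset.prod_pow_eq_pow_sum, ← Finset.prod_mul_distrib]
  apply Finset.prod_congr rfl
  intro j _
  rw [one_div, inv_pow, sub_mul, one_mul, inv_mul_cancel₀ (pow_ne_zero _ h0)]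

omit hq in
lemma exp_sum (n : ℕ) :
    (∑ j ∈ Finset.range (n+1), (5*j+1)) + (∑ j ∈ Finset.range n, (5*j+4))
      = 5*n^2 + 5*n + 1 := by
  induction n with
  | zero => simp
  | succ k ih =>
    rw [Finset.sum_range_succ (f := fun j => 5*j+1), Finset.sum_range_succ (f := fun j => 5*j+4),
      show 5*(k+1)^2+5*(k+1)+1 = (5*k^2+5*k+1) + (10*k+10) by ring, ← ih]
    omega

lemma cc_eq (n : ℕ) : (cc q n : ℝ) = PP q n * (q:ℝ) ^ (5*n^2+5*n+1) := by
  have h0 := hq0 hq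
  rw [cc]
  push_cast
  rw [← exp_sum n, pow_add, PP,
    ← prod_clear h0 (n+1) (fun j => 5*j+1), ← prod_clear h0 n (fun j => 5*j+4)]
  ring

lemma cc_ne (n : ℕ) : (cc q n : ℝ) ≠ 0 := by
  rw [cc_eq hq]
  exact mul_ne_zero (ne_of_gt (PP_pos hq n)) (pow_ne_zero _ (hq0 hq))

lemma tt_rat (n : ℕ) : tt q n = (q:ℝ)^(5*n+1) / (cc q n : ℝ) := by
  have h0 := hq0 hq
  have hx : (1/(q:ℝ))^(5*n^2) * (q:ℝ)^(5*n^2) = 1 := by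
    rw [← mul_pow]; field_simp; simp
  rw [tt_eq_PP, cc_eq hq,
    div_eq_div_iff (ne_of_gt (PP_pos hq n))
      (mul_ne_zero (ne_of_gt (PP_pos hq n)) (pow_ne_zero _ h0)),
    show 5*n^2+5*n+1 = 5*n^2 + (5*n+1) by ring, pow_add]
  linear_combination (PP q n * (q:ℝ)^(5*n+1)) * hx

omit hq in
lemma cc_split (n k : ℕ) :
    cc q (n + k) = cc q n * ((∏ j ∈ Finset.range k, (q ^ (5*(n+1+j)+1) - 1)) *
      ∏ j ∈ Finset.range k, (q ^ (5*(n+j)+4) - 1)) := by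
  rw [cc, cc, show n + k + 1 = (n+1) + k by omega,
    Finset.prod_range_add (fun j => (q ^ (5*j+1) - 1)) (n+1) k,
    Finset.prod_range_add (fun j => (q ^ (5*j+4) - 1)) n k]
  ring

lemma key_int (n k : ℕ) :
    (cc q (n+k) : ℝ) * tt q n =
      ((q^(5*n+1) * ((∏ j ∈ Finset.range k, (q ^ (5*(n+1+j)+1) - 1)) *
        ∏ j ∈ Finset.range k, (q ^ (5*(n+j)+4) - 1)) : ℤ) : ℝ) := by
  rw [tt_rat hq, cc_split (q := q) n k]
  push_cast
  field_simp [cc_ne hq n]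


lemma tt_ub' (n : ℕ) : |tt q n| ≤ 2 * (1/2 : ℝ)^n := by
  have h1 := tt_ub hq n
  have h2 : |1/(q:ℝ)|^(5*n^2) ≤ (1/2:ℝ)^(5*n^2) :=
    pow_le_pow_left₀ (abs_nonneg _) (Ybound hq) _
  have hnn : 5*n ≤ 5*n^2 := Nat.mul_le_mul_left 5 (Nat.le_self_pow two_ne_zero n)
  have h3 : ((1/2:ℝ))^(5*n^2) ≤ (1/2)^(5*n) :=
    pow_le_pow_of_le_one (by norm_num) (by norm_num) hnn
  have hcan : (1/2:ℝ)^(2*n) * 2^(2*n) = 1 := by rw [← mul_pow]; norm_num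
  have h4 : ((1/2:ℝ))^(5*n) * 2^(2*n+1) = 2 * (1/2)^(3*n) := by
    rw [show 5*n = 2*n+3*n by ring, pow_add, pow_succ]
    linear_combination (2 * (1/2:ℝ)^(3*n)) * hcan
  have h5 : ((1/2:ℝ))^(3*n) ≤ (1/2)^n :=
    pow_le_pow_of_le_one (by norm_num) (by norm_num) (by omega)
  have h6 : (0:ℝ) ≤ 2^(2*n+1) := by positivity
  calc |tt q n| ≤ |1/(q:ℝ)|^(5*n^2) * 2^(2*n+1) := h1
    _ ≤ (1/2:ℝ)^(5*n) * 2^(2*n+1) := by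
        apply mul_le_mul_of_nonneg_right (le_trans h2 h3) h6
    _ = 2 * (1/2)^(3*n) := h4
    _ ≤ 2 * (1/2)^n := by nlinarith [h5]

lemma tt_abs_summable : Summable (fun n => |tt q n|) := by
  apply Summable.of_nonneg_of_le (fun n => abs_nonneg _) (fun n => tt_ub' hq n)
  exact (summable_geometric_of_lt_one (by norm_num) (by norm_num)).mul_left 2

lemma tt_summable : Summable (tt q) := (tt_abs_summable hq).of_abs

lemma tt_shift_ub (M k : ℕ) (hM : 1 ≤ M) :
    |tt q (k + M)| ≤ (2^(2*M+1) * |1/(q:ℝ)|^(5*M^2)) * (1/2:ℝ)^k := by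
  have hY0 : (0:ℝ) ≤ |1/(q:ℝ)| := abs_nonneg _
  have hY1 : |1/(q:ℝ)| ≤ 1/2 := Ybound hq
  have h1 := tt_ub hq (k + M)
  have e1 : 5*(k+M)^2 = 5*M^2 + (10*M*k + 5*k^2) := by ring
  have e2 : 2*(k+M)+1 = (2*M+1) + 2*k := by ring
  have h2 : |1/(q:ℝ)|^(10*M*k + 5*k^2) ≤ (|1/(q:ℝ)|^(10*M))^k := by
    rw [← pow_mul]
    apply pow_le_pow_of_le_one hY0 (by linarith) (by nlinarith)
  have h3 : 4 * |1/(q:ℝ)|^(10*M) ≤ 1/2 := by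
    have : |1/(q:ℝ)|^(10*M) ≤ (1/2:ℝ)^(10) := by
      calc |1/(q:ℝ)|^(10*M) ≤ (1/2:ℝ)^(10*M) := pow_le_pow_left₀ hY0 hY1 _
        _ ≤ (1/2:ℝ)^10 := pow_le_pow_of_le_one (by norm_num) (by norm_num) (by omega)
    norm_num at this ⊢
    linarith
  have h4 : (2:ℝ)^(2*k) = 4^k := by rw [pow_mul]; norm_num
  calc |tt q (k+M)| ≤ |1/(q:ℝ)|^(5*(k+M)^2) * 2^(2*(k+M)+1) := h1
    _ = (2^(2*M+1) * |1/(q:ℝ)|^(5*M^2)) * (|1/(q:ℝ)|^(10*M*k + 5*k^2) * 4^k) := by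
        rw [e1, e2, pow_add (|1/(q:ℝ)|) (5*M^2), pow_add (2:ℝ) (2*M+1), h4]; ring
    _ ≤ (2^(2*M+1) * |1/(q:ℝ)|^(5*M^2)) * ((|1/(q:ℝ)|^(10*M))^k * 4^k) := by
        apply mul_le_mul_of_nonneg_left _ (by positivity)
        apply mul_le_mul_of_nonneg_right h2 (by positivity)
    _ = (2^(2*M+1) * |1/(q:ℝ)|^(5*M^2)) * (4 * |1/(q:ℝ)|^(10*M))^k := by
        rw [mul_pow]; ring
    _ ≤ (2^(2*M+1) * |1/(q:ℝ)|^(5*M^2)) * (1/2:ℝ)^k := by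
        apply mul_le_mul_of_nonneg_left _ (by positivity)
        exact pow_le_pow_left₀ (by positivity) h3 k

lemma tail_ub (M : ℕ) (hM : 1 ≤ M) :
    |∑' k, tt q (k + M)| ≤ 2^(2*M+2) * |1/(q:ℝ)|^(5*M^2) := by
  have hs : Summable (fun k => |tt q (k + M)|) :=
    (summable_nat_add_iff (f := fun n => |tt q n|) M).2 (tt_abs_summable hq)
  have hg : Summable (fun k => (2^(2*M+1) * |1/(q:ℝ)|^(5*M^2)) * (1/2:ℝ)^k) :=
    (summable_geometric_of_lt_one (by norm_num) (by norm_num)).mul_left _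
  calc |∑' k, tt q (k + M)| ≤ ∑' k, |tt q (k + M)| := by
        have h := norm_tsum_le_tsum_norm (f := fun k => tt q (k + M))
          (by simpa [Real.norm_eq_abs] using hs)
        simpa [Real.norm_eq_abs] using h
    _ ≤ ∑' k, (2^(2*M+1) * |1/(q:ℝ)|^(5*M^2)) * (1/2:ℝ)^k :=
        Summable.tsum_le_tsum (fun k => tt_shift_ub hq M k hM) hs hg
    _ = (2^(2*M+1) * |1/(q:ℝ)|^(5*M^2)) * ∑' k, (1/2:ℝ)^k := tsum_mul_left
    _ = 2^(2*M+2) * |1/(q:ℝ)|^(5*M^2) := by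
        rw [tsum_geometric_of_lt_one (by norm_num) (by norm_num)]
        rw [pow_succ]
        ring_nf


lemma cc_absY (N : ℕ) : |(cc q N : ℝ)| * |1/(q:ℝ)|^(5*N^2+5*N+1) ≤ 2^(2*N+1) := by
  have h0 := hq0 hq
  have h1 : |(q:ℝ)| * |1/(q:ℝ)| = 1 := by rw [← abs_mul]; field_simp; simp
  have h2 : |(cc q N : ℝ)| * |1/(q:ℝ)|^(5*N^2+5*N+1) = PP q N := by
    rw [cc_eq hq, abs_mul, abs_of_pos (PP_pos hq N), abs_pow, mul_assoc, ← mul_pow, h1,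
      one_pow, mul_one]
  rw [h2]; exact PP_ub hq N

lemma DT_bound (N : ℕ) :
    |(cc q N : ℝ)| * |∑' k, tt q (k + (N+1))| ≤ 2 * (1/2:ℝ)^N := by
  have hY0 : (0:ℝ) ≤ |1/(q:ℝ)| := abs_nonneg _
  have htail := tail_ub hq (N+1) (by omega)
  have hccY := cc_absY hq N
  have e1 : 5*(N+1)^2 = (5*N^2+5*N+1) + (5*N+4) := by ring
  have h2 : |1/(q:ℝ)|^(5*N+4) ≤ (1/2:ℝ)^(5*N+4) := pow_le_pow_left₀ hY0 (Ybound hq) _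
  have hccnn : (0:ℝ) ≤ |(cc q N : ℝ)| := abs_nonneg _
  calc |(cc q N : ℝ)| * |∑' k, tt q (k + (N+1))|
      ≤ |(cc q N : ℝ)| * (2^(2*(N+1)+2) * |1/(q:ℝ)|^(5*(N+1)^2)) :=
        mul_le_mul_of_nonneg_left htail hccnn
    _ = (|(cc q N : ℝ)| * |1/(q:ℝ)|^(5*N^2+5*N+1)) * (2^(2*(N+1)+2) * |1/(q:ℝ)|^(5*N+4)) := by
        rw [e1, pow_add]; ring
    _ ≤ 2^(2*N+1) * (2^(2*(N+1)+2) * (1/2:ℝ)^(5*N+4)) := by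
        apply mul_le_mul hccY _ (by positivity) (by positivity)
        exact mul_le_mul_of_nonneg_left h2 (by positivity)
    _ = 2 * (1/2:ℝ)^N := by
        have hc : (2:ℝ)^(4*N+4) * (1/2)^(4*N+4) = 1 := by rw [← mul_pow]; norm_num
        have ha : (2:ℝ)^(2*N+1) * 2^(2*(N+1)+2) = 2^(4*N+4) * 2 := by
          rw [← pow_add, show 2*N+1+(2*(N+1)+2) = (4*N+4)+1 by omega, pow_add, pow_one]
        have hb : (1/2:ℝ)^(5*N+4) = (1/2)^(4*N+4) * (1/2)^N := by
          rw [← pow_add]; congr 1; omega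
        rw [hb]
        linear_combination ((1/2:ℝ)^(4*N+4) * (1/2:ℝ)^N) * ha + (2 * (1/2:ℝ)^N) * hc

lemma tail_pos (N : ℕ) : 0 < |∑' k, tt q (k + (N+1))| := by
  have hY0 : (0:ℝ) < |1/(q:ℝ)| := Ypos hq
  have hsplit : ∑' k, tt q (k + (N+1)) = tt q (N+1) + ∑' k, tt q (k + (N+2)) := by
    have hs : Summable (fun k => tt q (k + (N+1))) :=
      (summable_nat_add_iff (f := tt q) (N+1)).2 (tt_summable hq)
    rw [Summable.tsum_eq_zero_add hs]
    congr 1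
    · norm_num
    · exact tsum_congr (fun b => congrArg (tt q) (by omega))
  have h1 : |1/(q:ℝ)|^(5*(N+1)^2) * (1/2)^(2*(N+1)+1) ≤ |tt q (N+1)| := tt_lb hq (N+1)
  have h2 := tail_ub hq (N+2) (by omega)
  have h3 : |1/(q:ℝ)|^(10*N+15) ≤ (1/2:ℝ)^(10*N+15) := pow_le_pow_left₀ hY0.le (Ybound hq) _
  have e2 : (2:ℝ)^(2*(N+2)+2) * (1/2)^(10*N+15) ≤ (1/2) * (1/2)^(2*(N+1)+1) := by
    have hc : (2:ℝ)^(2*N+6) * (1/2)^(2*N+6) = 1 := by rw [← mul_pow]; norm_num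
    have h65 : (1/2:ℝ)^(6*N+5) ≤ 1 := pow_le_one₀ (by norm_num) (by norm_num)
    calc (2:ℝ)^(2*(N+2)+2) * (1/2)^(10*N+15)
        = ((2:ℝ)^(2*N+6) * (1/2)^(2*N+6)) * ((1/2)^(2*N+4) * (1/2)^(6*N+5)) := by
          rw [show 2*(N+2)+2 = 2*N+6 by omega,
            show 10*N+15 = (2*N+6) + ((2*N+4) + (6*N+5)) by omega,
            pow_add (1/2:ℝ) (2*N+6) ((2*N+4)+(6*N+5)), pow_add (1/2:ℝ) (2*N+4) (6*N+5)]
          ring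
      _ = (1/2)^(2*N+4) * (1/2)^(6*N+5) := by rw [hc, one_mul]
      _ ≤ (1/2)^(2*N+4) * 1 := mul_le_mul_of_nonneg_left h65 (by positivity)
      _ = (1/2) * (1/2)^(2*(N+1)+1) := by
          rw [mul_one, show 2*N+4 = (2*(N+1)+1)+1 by omega, pow_succ]; ring
  have key : 2^(2*(N+2)+2) * |1/(q:ℝ)|^(5*(N+2)^2)
      ≤ (1/2) * (|1/(q:ℝ)|^(5*(N+1)^2) * (1/2)^(2*(N+1)+1)) := by
    have e1 : 5*(N+2)^2 = 5*(N+1)^2 + (10*N+15) := by ring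
    calc 2^(2*(N+2)+2) * |1/(q:ℝ)|^(5*(N+2)^2)
        = |1/(q:ℝ)|^(5*(N+1)^2) * (2^(2*(N+2)+2) * |1/(q:ℝ)|^(10*N+15)) := by
          rw [e1, pow_add]; ring
      _ ≤ |1/(q:ℝ)|^(5*(N+1)^2) * (2^(2*(N+2)+2) * (1/2)^(10*N+15)) := by
          apply mul_le_mul_of_nonneg_left _ (by positivity)
          exact mul_le_mul_of_nonneg_left h3 (by positivity)
      _ ≤ |1/(q:ℝ)|^(5*(N+1)^2) * ((1/2) * (1/2)^(2*(N+1)+1)) :=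
          mul_le_mul_of_nonneg_left e2 (by positivity)
      _ = (1/2) * (|1/(q:ℝ)|^(5*(N+1)^2) * (1/2)^(2*(N+1)+1)) := by ring
  have hL : (0:ℝ) < |1/(q:ℝ)|^(5*(N+1)^2) * (1/2)^(2*(N+1)+1) := by positivity
  have habs : |tt q (N+1)| ≤ |tt q (N+1) + ∑' k, tt q (k + (N+2))| + |∑' k, tt q (k + (N+2))| := by
    have h := abs_add_le (tt q (N+1) + ∑' k, tt q (k + (N+2))) (-(∑' k, tt q (k + (N+2))))
    rw [abs_neg] at h
    simpa using h
  rw [hsplit]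
  linarith

lemma S_int (N : ℕ) : ∃ E : ℤ,
    (cc q N : ℝ) * ∑ n ∈ Finset.range (N+1), tt q n = (E : ℝ) := by
  refine ⟨∑ n ∈ Finset.range (N+1), (q^(5*n+1) *
    ((∏ j ∈ Finset.range (N-n), (q ^ (5*(n+1+j)+1) - 1)) *
      ∏ j ∈ Finset.range (N-n), (q ^ (5*(n+j)+4) - 1))), ?_⟩
  rw [Finset.mul_sum, Int.cast_sum]
  apply Finset.sum_congr rfl
  intro n hn
  have h := key_int hq n (N - n)
  rw [show n + (N - n) = N by
    have := Finset.mem_range.mp hn; omega] at h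
  exact h

end MockAux

/-- The fifth-order mock theta function
`Φ(x) = -1 + Σ_{n=0}^∞ x^{5n²} / ((x; x⁵)_{n+1} (x⁴; x⁵)_n)`
takes an irrational value at `x = 1/q` for every integer `q` with `|q| ≥ 2`. -/
theorem mock_theta_Phi_irrational (q : ℤ) (hq : 2 ≤ |q|) :
    Irrational (-1 + ∑' n : ℕ,
      (1 / (q : ℝ)) ^ (5 * n ^ 2) /
        ((∏ j ∈ Finset.range (n + 1), (1 - (1 / (q : ℝ)) ^ (5 * j + 1))) *
          ∏ j ∈ Finset.range n, (1 - (1 / (q : ℝ)) ^ (5 * j + 4)))) := by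
  show Irrational (-1 + ∑' n : ℕ, MockAux.tt q n)
  rintro ⟨r, hr⟩
  have hs : ∑' n, MockAux.tt q n = ((r + 1 : ℚ) : ℝ) := by
    push_cast
    linarith [hr]
  set s : ℚ := r + 1 with hsdef
  set N : ℕ := s.den + 2 with hN
  obtain ⟨E, hE⟩ := MockAux.S_int hq N
  have hsum := Summable.sum_add_tsum_nat_add (N+1) (MockAux.tt_summable hq)
  set T := ∑' k, MockAux.tt q (k + (N+1)) with hTdef
  set S := ∑ n ∈ Finset.range (N+1), MockAux.tt q n with hSdef
  have hb0 : (0:ℝ) < (s.den : ℝ) := by exact_mod_cast s.pos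
  have hden : (s.den : ℝ) * ∑' n, MockAux.tt q n = (s.num : ℝ) := by
    rw [hs, Rat.cast_def]
    field_simp
  set z : ℤ := s.num * MockAux.cc q N - (s.den : ℤ) * E with hz
  have hzr : (z:ℝ) = (s.den : ℝ) * ((MockAux.cc q N : ℝ) * T) := by
    have hnum : (s.num : ℝ) = (s.den : ℝ) * (S + T) := by
      rw [← hden, ← hsum]
    rw [hz]
    push_cast
    rw [hnum, ← hE]
    ring
  have hTne : T ≠ 0 := by
    rw [hTdef]
    exact abs_pos.mp (MockAux.tail_pos hq N)
  have hzne : (z:ℝ) ≠ 0 := by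
    rw [hzr]
    exact mul_ne_zero (ne_of_gt hb0)
      (mul_ne_zero (MockAux.cc_ne hq N) hTne)
  have hlt : |(z:ℝ)| < 1 := by
    rw [hzr, abs_mul, abs_mul, abs_of_pos hb0]
    have h1 : |(MockAux.cc q N : ℝ)| * |T| ≤ 2 * (1/2:ℝ)^N := by
      rw [hTdef]
      exact MockAux.DT_bound hq N
    have hnat : 2 * s.den < 2^N := by
      have h := Nat.lt_two_pow_self (n := s.den)
      have h4 : (2:ℕ)^N = 2^s.den * 4 := by rw [hN, pow_add]; norm_num
      omega
    have hcast : (2 * (s.den:ℝ)) < (2:ℝ)^N := by exact_mod_cast hnat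
    have hp : (0:ℝ) < (1/2:ℝ)^N := by positivity
    have hq1 : (2:ℝ)^N * (1/2:ℝ)^N = 1 := by rw [← mul_pow]; norm_num
    have h5 := mul_lt_mul_of_pos_right hcast hp
    rw [hq1] at h5
    have h6 : (s.den:ℝ) * (|(MockAux.cc q N : ℝ)| * |T|) ≤ (s.den:ℝ) * (2 * (1/2:ℝ)^N) :=
      mul_le_mul_of_nonneg_left h1 hb0.le
    nlinarith
  have hzz : z = 0 := by
    have h : ((|z| : ℤ) : ℝ) < 1 := by rw [Int.cast_abs]; exact hlt
    have h' : |z| < 1 := by exact_mod_cast h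
    exact Int.abs_lt_one_iff.mp h'
  rw [hzz] at hzne
  simp at hzne
end

section
/- For every integer q with |q| ≥ 2, the value Ψ(1/q) = −1 + Σ_{n=0}^∞ (1/q)^{5n²} / ( ∏_{j=0}^{n} (1 − (1/q)^{5j+2}) · ∏_{j=0}^{n−1} (1 − (1/q)^{5j+3}) ) is irrational; i.e., the fifth-order mock theta function Ψ takes an irrational value at each point ±1/2, ±1/3, ±1/4, … . -/
open Finset

-- product lower bound
lemma prod_one_sub_ge (s : Finset ℕ) (ε : ℕ → ℝ) (h0 : ∀ j ∈ s, 0 ≤ ε j)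
    (h1 : ∀ j ∈ s, ε j ≤ 1) :
    1 - ∑ j ∈ s, ε j ≤ ∏ j ∈ s, (1 - ε j) := by
  induction s using Finset.cons_induction with
  | empty => simp
  | cons i s hi ih =>
    rw [Finset.prod_cons, Finset.sum_cons]
    have h0' : ∀ j ∈ s, 0 ≤ ε j := fun j hj => h0 j (Finset.mem_cons_of_mem hj)
    have h1' : ∀ j ∈ s, ε j ≤ 1 := fun j hj => h1 j (Finset.mem_cons_of_mem hj)
    have ihs := ih h0' h1'
    have hεi0 := h0 i (Finset.mem_cons_self i s)
    have hεi1 := h1 i (Finset.mem_cons_self i s)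
    have hsum0 : 0 ≤ ∑ j ∈ s, ε j := Finset.sum_nonneg h0'
    nlinarith [Finset.sum_nonneg h0']

lemma prod_one_sub_pos (s : Finset ℕ) (ε : ℕ → ℝ) (h0 : ∀ j ∈ s, 0 ≤ ε j)
    (hs : ∑ j ∈ s, ε j ≤ 1/2) :
    1/2 ≤ ∏ j ∈ s, (1 - ε j) := by
  have := prod_one_sub_ge s ε h0 (fun j hj => le_trans (Finset.single_le_sum h0 hj) (by linarith))
  linarith

lemma prod_one_add_le (s : Finset ℕ) (ε : ℕ → ℝ) (h0 : ∀ j ∈ s, 0 ≤ ε j)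
    (hs : ∑ j ∈ s, ε j ≤ 1/2) :
    ∏ j ∈ s, (1 + ε j) ≤ 2 := by
  have h1 : ∀ j ∈ s, ε j ≤ 1 := fun j hj => le_trans (Finset.single_le_sum h0 hj) (by linarith)
  have hlow := prod_one_sub_pos s ε h0 hs
  have hmul : (∏ j ∈ s, (1 + ε j)) * ∏ j ∈ s, (1 - ε j) ≤ 1 := by
    rw [← Finset.prod_mul_distrib]
    apply Finset.prod_le_one
    · intro j hj; nlinarith [h0 j hj, h1 j hj]
    · intro j hj; nlinarith [h0 j hj, h1 j hj]
  nlinarith [Finset.prod_nonneg (fun j hj => by nlinarith [h0 j hj] : ∀ j ∈ s, (0:ℝ) ≤ 1 + ε j)]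

lemma sum_pow_bound (t : ℝ) (h0 : 0 ≤ t) (h : t ≤ 1/2) (c m : ℕ) :
    ∑ j ∈ Finset.range m, t^(5*j+c) ≤ (1/2)^c * 2 := by
  have step : ∀ j : ℕ, t^(5*j+c) ≤ (1/2)^c * (1/2)^j := by
    intro j
    have h1 : t^(5*j+c) ≤ (1/2:ℝ)^(5*j+c) := pow_le_pow_left₀ h0 h _
    have h2 : ((1:ℝ)/2)^(5*j+c) ≤ (1/2)^(j+c) :=
      pow_le_pow_of_le_one (by norm_num) (by norm_num) (by omega)
    calc t^(5*j+c) ≤ (1/2:ℝ)^(j+c) := le_trans h1 h2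
      _ = (1/2)^c * (1/2)^j := by rw [pow_add]; ring
  calc ∑ j ∈ Finset.range m, t^(5*j+c) ≤ ∑ j ∈ Finset.range m, (1/2:ℝ)^c * (1/2)^j :=
        Finset.sum_le_sum (fun j _ => step j)
    _ = (1/2)^c * ∑ j ∈ Finset.range m, (1/2:ℝ)^j := by rw [Finset.mul_sum]
    _ ≤ (1/2)^c * 2 := by
        apply mul_le_mul_of_nonneg_left _ (by positivity)
        calc ∑ j ∈ Finset.range m, (1/2:ℝ)^j
            ≤ ∑' j : ℕ, (1/2:ℝ)^j := Summable.sum_le_tsum _ (fun j _ => by positivity)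
              (summable_geometric_of_lt_one (by norm_num) (by norm_num))
          _ = 2 := tsum_geometric_two

lemma prodP_bounds (t : ℝ) (h0 : 0 ≤ t) (h : t ≤ 1/2) (x : ℝ) (hx : |x| = t)
    (c m : ℕ) (hc : 2 ≤ c) :
    1/2 ≤ |∏ j ∈ Finset.range m, (1 - x^(5*j+c))| ∧
      |∏ j ∈ Finset.range m, (1 - x^(5*j+c))| ≤ 2 := by
  have habs : |∏ j ∈ Finset.range m, (1 - x^(5*j+c))|
      = ∏ j ∈ Finset.range m, |1 - x^(5*j+c)| := Finset.abs_prod _ _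
  have hterm_lo : ∀ j : ℕ, 1 - t^(5*j+c) ≤ |1 - x^(5*j+c)| := by
    intro j
    have : |x^(5*j+c)| = t^(5*j+c) := by rw [abs_pow, hx]
    calc 1 - t^(5*j+c) = 1 - |x^(5*j+c)| := by rw [this]
      _ ≤ |1 - x^(5*j+c)| := by
          have := abs_sub_abs_le_abs_sub (1:ℝ) (x^(5*j+c))
          simpa using this
  have hterm_hi : ∀ j : ℕ, |1 - x^(5*j+c)| ≤ 1 + t^(5*j+c) := by
    intro j
    have h1 : |x^(5*j+c)| = t^(5*j+c) := by rw [abs_pow, hx]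
    calc |1 - x^(5*j+c)| ≤ |(1:ℝ)| + |x^(5*j+c)| := abs_sub _ _
      _ = 1 + t^(5*j+c) := by rw [abs_one, h1]
  have htnn : ∀ j : ℕ, (0:ℝ) ≤ t^(5*j+c) := fun j => by positivity
  have hsum : ∑ j ∈ Finset.range m, t^(5*j+c) ≤ 1/2 := by
    have := sum_pow_bound t h0 h c m
    have h2 : ((1:ℝ)/2)^c * 2 ≤ (1/2)^2 * 2 := by
      apply mul_le_mul_of_nonneg_right _ (by norm_num)
      exact pow_le_pow_of_le_one (by norm_num) (by norm_num) hc
    nlinarith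
  have htle1 : ∀ j : ℕ, t^(5*j+c) ≤ 1 := by
    intro j
    exact pow_le_one₀ h0 (by linarith)
  constructor
  · rw [habs]
    calc (1:ℝ)/2 ≤ ∏ j ∈ Finset.range m, (1 - t^(5*j+c)) :=
          prod_one_sub_pos _ _ (fun j _ => htnn j) hsum
      _ ≤ ∏ j ∈ Finset.range m, |1 - x^(5*j+c)| := by
          apply Finset.prod_le_prod
          · intro j _; linarith [htle1 j]
          · intro j _; exact hterm_lo j
  · rw [habs]
    calc ∏ j ∈ Finset.range m, |1 - x^(5*j+c)|
        ≤ ∏ j ∈ Finset.range m, (1 + t^(5*j+c)) := by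
          apply Finset.prod_le_prod
          · intro j _; exact abs_nonneg _
          · intro j _; exact hterm_hi j
      _ ≤ 2 := prod_one_add_le _ _ (fun j _ => htnn j) hsum

noncomputable def psiTerm (q : ℤ) (n : ℕ) : ℝ :=
  (1 / (q : ℝ)) ^ (5 * n ^ 2) /
    ((∏ j ∈ Finset.range (n + 1), (1 - (1 / (q : ℝ)) ^ (5 * j + 2))) *
      ∏ j ∈ Finset.range n, (1 - (1 / (q : ℝ)) ^ (5 * j + 3)))

lemma q_real (q : ℤ) (hq : 2 ≤ |q|) : (2:ℝ) ≤ |(q:ℝ)| := by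
  have : ((2:ℤ):ℝ) ≤ ((|q|:ℤ):ℝ) := Int.cast_le.mpr hq
  rwa [Int.cast_abs, Int.cast_ofNat] at this

lemma t_facts (q : ℤ) (hq : 2 ≤ |q|) :
    0 < |1/(q:ℝ)| ∧ |1/(q:ℝ)| ≤ 1/2 := by
  have h2 := q_real q hq
  have hq0 : (q:ℝ) ≠ 0 := by
    intro h; rw [h] at h2; simp at h2; linarith
  constructor
  · simpa using abs_pos.mpr (one_div_ne_zero hq0)
  · rw [abs_div, abs_one, div_le_div_iff₀ (by linarith) (by norm_num)]
    linarith

lemma psiTerm_bounds (q : ℤ) (hq : 2 ≤ |q|) (n : ℕ) :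
    (1/4) * |1/(q:ℝ)|^(5*n^2) ≤ |psiTerm q n| ∧
      |psiTerm q n| ≤ 4 * |1/(q:ℝ)|^(5*n^2) := by
  obtain ⟨ht0, ht⟩ := t_facts q hq
  obtain ⟨hP1, hP2⟩ := prodP_bounds |1/(q:ℝ)| ht0.le ht (1/(q:ℝ)) rfl 2 (n+1) le_rfl
  obtain ⟨hR1, hR2⟩ := prodP_bounds |1/(q:ℝ)| ht0.le ht (1/(q:ℝ)) rfl 3 n (by norm_num)
  have hnum : |(1 / (q : ℝ)) ^ (5 * n ^ 2)| = |1/(q:ℝ)|^(5*n^2) := abs_pow _ _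
  have key : |psiTerm q n| = |1/(q:ℝ)|^(5*n^2) /
      (|∏ j ∈ Finset.range (n + 1), (1 - (1 / (q : ℝ)) ^ (5 * j + 2))| *
        |∏ j ∈ Finset.range n, (1 - (1 / (q : ℝ)) ^ (5 * j + 3))|) := by
    rw [psiTerm, abs_div, abs_mul, hnum]
  have hden_pos : 0 < |∏ j ∈ Finset.range (n + 1), (1 - (1 / (q : ℝ)) ^ (5 * j + 2))| *
      |∏ j ∈ Finset.range n, (1 - (1 / (q : ℝ)) ^ (5 * j + 3))| := by nlinarith
  have htp : (0:ℝ) ≤ |1/(q:ℝ)|^(5*n^2) := by positivity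
  set P := |∏ j ∈ Finset.range (n + 1), (1 - (1 / (q : ℝ)) ^ (5 * j + 2))|
  set R := |∏ j ∈ Finset.range n, (1 - (1 / (q : ℝ)) ^ (5 * j + 3))|
  have hPR1 : 1/4 ≤ P * R := by nlinarith
  have hPR2 : P * R ≤ 4 := by nlinarith [abs_nonneg (∏ j ∈ Finset.range (n + 1), (1 - (1 / (q : ℝ)) ^ (5 * j + 2))), abs_nonneg (∏ j ∈ Finset.range n, (1 - (1 / (q : ℝ)) ^ (5 * j + 3)))]
  rw [key]
  constructor
  · rw [le_div_iff₀ hden_pos]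
    nlinarith [mul_le_mul_of_nonneg_left hPR2 (show (0:ℝ) ≤ 1/4 * |1/(q:ℝ)|^(5*n^2) by positivity)]
  · rw [div_le_iff₀ hden_pos]
    nlinarith [mul_le_mul_of_nonneg_left hPR1 (show (0:ℝ) ≤ 4 * |1/(q:ℝ)|^(5*n^2) by positivity)]

lemma psiTerm_summable (q : ℤ) (hq : 2 ≤ |q|) : Summable (psiTerm q) := by
  obtain ⟨ht0, ht⟩ := t_facts q hq
  apply Summable.of_norm_bounded (g := fun n => 4 * (1/2:ℝ)^n)
  · exact (summable_geometric_of_lt_one (by norm_num) (by norm_num)).mul_left 4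
  · intro n
    have h1 := (psiTerm_bounds q hq n).2
    have h2 : |1/(q:ℝ)|^(5*n^2) ≤ (1/2:ℝ)^n := by
      calc |1/(q:ℝ)|^(5*n^2) ≤ (1/2:ℝ)^(5*n^2) := pow_le_pow_left₀ ht0.le ht _
        _ ≤ (1/2:ℝ)^n := pow_le_pow_of_le_one (by norm_num) (by norm_num) (by nlinarith)
    simp only [Real.norm_eq_abs]
    nlinarith

lemma psiTail_upper (q : ℤ) (hq : 2 ≤ |q|) (n : ℕ) :
    |∑' k : ℕ, psiTerm q (k + n)| ≤ 8 * |1/(q:ℝ)|^(5*n^2) := by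
  obtain ⟨ht0, ht⟩ := t_facts q hq
  have hsummable : Summable (fun k => psiTerm q (k + n)) :=
    (summable_nat_add_iff n).mpr (psiTerm_summable q hq)
  have hbound : ∀ k : ℕ, |psiTerm q (k + n)| ≤ 4 * |1/(q:ℝ)|^(5*n^2) * |1/(q:ℝ)|^k := by
    intro k
    have h1 := (psiTerm_bounds q hq (k + n)).2
    have h2 : |1/(q:ℝ)|^(5*(k+n)^2) ≤ |1/(q:ℝ)|^(5*n^2 + k) :=
      pow_le_pow_of_le_one ht0.le (by linarith)
        (by
          have hexp : 5*(k+n)^2 = 5*k^2 + 10*(k*n) + 5*n^2 := by ring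
          have hk := Nat.le_self_pow (two_ne_zero) k
          rw [hexp]
          linarith [Nat.zero_le (k*n)])
    rw [pow_add] at h2
    nlinarith
  have hg : Summable (fun k : ℕ => 4 * |1/(q:ℝ)|^(5*n^2) * |1/(q:ℝ)|^k) :=
    (summable_geometric_of_lt_one ht0.le (by linarith)).mul_left _
  have habs : Summable (fun k : ℕ => |psiTerm q (k + n)|) := hsummable.abs
  have step1 : |∑' k : ℕ, psiTerm q (k + n)| ≤ ∑' k : ℕ, |psiTerm q (k + n)| := by
    have := norm_tsum_le_tsum_norm (f := fun k : ℕ => psiTerm q (k + n))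
      (by simpa only [Real.norm_eq_abs] using habs)
    simpa only [Real.norm_eq_abs] using this
  have step2 : ∑' k : ℕ, |psiTerm q (k + n)|
      ≤ ∑' k : ℕ, 4 * |1/(q:ℝ)|^(5*n^2) * |1/(q:ℝ)|^k :=
    Summable.tsum_le_tsum (fun k => hbound k) habs hg
  have step3 : ∑' k : ℕ, 4 * |1/(q:ℝ)|^(5*n^2) * |1/(q:ℝ)|^k
      = 4 * |1/(q:ℝ)|^(5*n^2) * (1 - |1/(q:ℝ)|)⁻¹ := by
    rw [tsum_mul_left, tsum_geometric_of_lt_one ht0.le (by linarith)]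
  calc |∑' k : ℕ, psiTerm q (k + n)|
      ≤ 4 * |1/(q:ℝ)|^(5*n^2) * (1 - |1/(q:ℝ)|)⁻¹ := by
        rw [← step3]; exact le_trans step1 step2
    _ ≤ 8 * |1/(q:ℝ)|^(5*n^2) := by
        have hinv : (1 - |1/(q:ℝ)|)⁻¹ ≤ 2 := by
          rw [inv_le_comm₀ (by linarith) (by norm_num)]
          linarith
        have : (0:ℝ) ≤ 4 * |1/(q:ℝ)|^(5*n^2) := by positivity
        nlinarith

lemma psiTail_lower (q : ℤ) (hq : 2 ≤ |q|) (n : ℕ) :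
    (1/8) * |1/(q:ℝ)|^(5*(n+1)^2) ≤ |∑' k : ℕ, psiTerm q (k + (n+1))| := by
  obtain ⟨ht0, ht⟩ := t_facts q hq
  have hsummable : Summable (fun k => psiTerm q (k + (n+1))) :=
    (summable_nat_add_iff (n+1)).mpr (psiTerm_summable q hq)
  have hzero : ∑' k : ℕ, psiTerm q (k + (n+1))
      = psiTerm q (n+1) + ∑' k : ℕ, psiTerm q (k + (n+2)) := by
    rw [Summable.tsum_eq_zero_add hsummable]
    congr 1
    · simp
    · apply tsum_congr; intro k; congr 1; omega
  have h0 := (psiTerm_bounds q hq (n+1)).1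
  have hrest := psiTail_upper q hq (n+2)
  have hsmall : 8 * |1/(q:ℝ)|^(5*(n+2)^2) ≤ (1/8) * |1/(q:ℝ)|^(5*(n+1)^2) := by
    have he : 5*(n+2)^2 = 5*(n+1)^2 + (10*n+15) := by ring
    rw [he, pow_add]
    have h1 : |1/(q:ℝ)|^(10*n+15) ≤ (1/2:ℝ)^(10*n+15) := pow_le_pow_left₀ ht0.le ht _
    have h2 : ((1:ℝ)/2)^(10*n+15) ≤ (1/2:ℝ)^15 :=
      pow_le_pow_of_le_one (by norm_num) (by norm_num) (by omega)
    have h3 : ((1:ℝ)/2)^15 ≤ 1/64 := by norm_num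
    have hp : (0:ℝ) ≤ |1/(q:ℝ)|^(5*(n+1)^2) := by positivity
    nlinarith [pow_nonneg ht0.le (10*n+15)]
  calc (1/8) * |1/(q:ℝ)|^(5*(n+1)^2)
      ≤ (1/4) * |1/(q:ℝ)|^(5*(n+1)^2) - 8 * |1/(q:ℝ)|^(5*(n+2)^2) := by
        have hp : (0:ℝ) ≤ |1/(q:ℝ)|^(5*(n+1)^2) := by positivity
        linarith
    _ ≤ |psiTerm q (n+1)| - |∑' k : ℕ, psiTerm q (k + (n+2))| := by
        linarith
    _ ≤ |∑' k : ℕ, psiTerm q (k + (n+1))| := by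
        rw [hzero]
        have := abs_add_le (psiTerm q (n+1) + ∑' k : ℕ, psiTerm q (k + (n+2)))
          (-(∑' k : ℕ, psiTerm q (k + (n+2))))
        simp only [add_neg_cancel_right, abs_neg] at this
        linarith

def psiD (q : ℤ) (n : ℕ) : ℤ :=
  (∏ j ∈ Finset.range (n+1), (q^(5*j+2) - 1)) * ∏ j ∈ Finset.range n, (q^(5*j+3) - 1)

lemma exp_sum (k : ℕ) :
    (∑ j ∈ Finset.range (k+1), (5*j+2)) + (∑ j ∈ Finset.range k, (5*j+3))
      = 5*k^2+5*k+2 := by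
  induction k with
  | zero => simp
  | succ k ih =>
    rw [Finset.sum_range_succ, Finset.sum_range_succ (f := fun j => 5*j+3)]
    ring_nf
    ring_nf at ih
    omega

lemma psiD_cast (q : ℤ) (hq : 2 ≤ |q|) (k : ℕ) :
    (psiD q k : ℝ) =
      ((∏ j ∈ Finset.range (k+1), (1 - (1/(q:ℝ))^(5*j+2))) *
        ∏ j ∈ Finset.range k, (1 - (1/(q:ℝ))^(5*j+3))) * (q:ℝ)^(5*k^2+5*k+2) := by
  have h2 := q_real q hq
  have hq0 : (q:ℝ) ≠ 0 := by intro h; rw [h] at h2; simp at h2; linarith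
  have factor : ∀ m : ℕ, ((q:ℝ)^m - 1) = (1 - (1/(q:ℝ))^m) * (q:ℝ)^m := by
    intro m
    field_simp
    rw [mul_sub, mul_one, one_div, inv_pow, mul_inv_cancel₀ (pow_ne_zero m hq0)]
  have e1 : (∏ j ∈ Finset.range (k+1), ((q:ℝ)^(5*j+2) - 1))
      = (∏ j ∈ Finset.range (k+1), (1 - (1/(q:ℝ))^(5*j+2)))
        * (q:ℝ)^(∑ j ∈ Finset.range (k+1), (5*j+2)) := by
    rw [← Finset.prod_pow_eq_pow_sum, ← Finset.prod_mul_distrib]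
    exact Finset.prod_congr rfl (fun j _ => factor (5*j+2))
  have e2 : (∏ j ∈ Finset.range k, ((q:ℝ)^(5*j+3) - 1))
      = (∏ j ∈ Finset.range k, (1 - (1/(q:ℝ))^(5*j+3)))
        * (q:ℝ)^(∑ j ∈ Finset.range k, (5*j+3)) := by
    rw [← Finset.prod_pow_eq_pow_sum, ← Finset.prod_mul_distrib]
    exact Finset.prod_congr rfl (fun j _ => factor (5*j+3))
  have : (psiD q k : ℝ) = (∏ j ∈ Finset.range (k+1), ((q:ℝ)^(5*j+2) - 1))
      * ∏ j ∈ Finset.range k, ((q:ℝ)^(5*j+3) - 1) := by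
    rw [psiD]
    push_cast
    rfl
  rw [this, e1, e2, ← exp_sum k, pow_add]
  ring

lemma psiD_mul_term (q : ℤ) (hq : 2 ≤ |q|) (k : ℕ) :
    (psiD q k : ℝ) * psiTerm q k = (q:ℝ)^(5*k+2) := by
  have h2 := q_real q hq
  have hq0 : (q:ℝ) ≠ 0 := by intro h; rw [h] at h2; simp at h2; linarith
  obtain ⟨ht0, ht⟩ := t_facts q hq
  obtain ⟨hP1, _⟩ := prodP_bounds |1/(q:ℝ)| ht0.le ht (1/(q:ℝ)) rfl 2 (k+1) le_rfl
  obtain ⟨hR1, _⟩ := prodP_bounds |1/(q:ℝ)| ht0.le ht (1/(q:ℝ)) rfl 3 k (by norm_num)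
  have hP0 : (∏ j ∈ Finset.range (k+1), (1 - (1/(q:ℝ))^(5*j+2))) ≠ 0 := by
    intro h; rw [h] at hP1; simp at hP1; linarith
  have hR0 : (∏ j ∈ Finset.range k, (1 - (1/(q:ℝ))^(5*j+3))) ≠ 0 := by
    intro h; rw [h] at hR1; simp at hR1; linarith
  have hpow : (1/(q:ℝ))^(5*k^2) * (q:ℝ)^(5*k^2+5*k+2) = (q:ℝ)^(5*k+2) := by
    rw [show 5*k^2+5*k+2 = 5*k^2 + (5*k+2) from by ring, pow_add, ← mul_assoc,
      ← mul_pow, one_div, inv_mul_cancel₀ hq0, one_pow, one_mul]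
  rw [psiD_cast q hq k, psiTerm]
  set P := ∏ j ∈ Finset.range (k+1), (1 - (1/(q:ℝ))^(5*j+2)) with hPdef
  set R := ∏ j ∈ Finset.range k, (1 - (1/(q:ℝ))^(5*j+3)) with hRdef
  have hPR : P * R ≠ 0 := mul_ne_zero hP0 hR0
  calc P * R * (q:ℝ)^(5*k^2+5*k+2) * ((1/(q:ℝ))^(5*k^2) / (P * R))
      = ((1/(q:ℝ))^(5*k^2) * (q:ℝ)^(5*k^2+5*k+2)) * ((P * R) / (P * R)) := by ring
    _ = (1/(q:ℝ))^(5*k^2) * (q:ℝ)^(5*k^2+5*k+2) := by rw [div_self hPR, mul_one]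
    _ = (q:ℝ)^(5*k+2) := hpow

lemma psiD_ne_zero (q : ℤ) (hq : 2 ≤ |q|) (n : ℕ) : psiD q n ≠ 0 := by
  have key : ∀ m : ℕ, 2 ≤ m → q^m - 1 ≠ 0 := by
    intro m hm h
    have h1 : q^m = 1 := by omega
    have h2 : |q^m| = 1 := by rw [h1]; rfl
    rw [abs_pow] at h2
    have h3 : (2:ℤ)^m ≤ |q|^m := pow_le_pow_left₀ (by norm_num) hq m
    have h4 : (2:ℤ)^2 ≤ 2^m := pow_le_pow_right₀ (by norm_num) hm
    omega
  apply mul_ne_zero <;> apply Finset.prod_ne_zero_iff.mpr <;>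
    intro j _ <;> exact key _ (by omega)

lemma psiD_split (q : ℤ) {k n : ℕ} (hk : k ≤ n) :
    psiD q n = psiD q k *
      ((∏ j ∈ Finset.Ico (k+1) (n+1), (q^(5*j+2) - 1)) *
        ∏ j ∈ Finset.Ico k n, (q^(5*j+3) - 1)) := by
  rw [psiD, psiD, ← Finset.prod_range_mul_prod_Ico (fun j => q^(5*j+2) - 1)
    (by omega : k+1 ≤ n+1), ← Finset.prod_range_mul_prod_Ico (fun j => q^(5*j+3) - 1) hk]
  ring

lemma partial_sum_int (q : ℤ) (hq : 2 ≤ |q|) (n : ℕ) :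
    ∃ N : ℤ, (N : ℝ) = (psiD q n : ℝ) * ∑ k ∈ Finset.range (n+1), psiTerm q k := by
  refine ⟨∑ k ∈ Finset.range (n+1), q^(5*k+2) *
    ((∏ j ∈ Finset.Ico (k+1) (n+1), (q^(5*j+2) - 1)) *
      ∏ j ∈ Finset.Ico k n, (q^(5*j+3) - 1)), ?_⟩
  rw [Finset.mul_sum, Int.cast_sum]
  apply Finset.sum_congr rfl
  intro k hk
  have hk' : k ≤ n := by have := Finset.mem_range.mp hk; omega
  rw [psiD_split q hk']
  push_cast
  rw [← psiD_mul_term q hq k]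
  ring

lemma psiD_abs_le (q : ℤ) (hq : 2 ≤ |q|) (n : ℕ) :
    |(psiD q n : ℝ)| ≤ 4 * |(q:ℝ)|^(5*n^2+5*n+2) := by
  obtain ⟨ht0, ht⟩ := t_facts q hq
  obtain ⟨_, hP2⟩ := prodP_bounds |1/(q:ℝ)| ht0.le ht (1/(q:ℝ)) rfl 2 (n+1) le_rfl
  obtain ⟨_, hR2⟩ := prodP_bounds |1/(q:ℝ)| ht0.le ht (1/(q:ℝ)) rfl 3 n (by norm_num)
  rw [psiD_cast q hq n, abs_mul, abs_mul, abs_pow]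
  have h1 : (0:ℝ) ≤ |(q:ℝ)|^(5*n^2+5*n+2) := by positivity
  have hAB : |∏ j ∈ Finset.range (n+1), (1 - (1/(q:ℝ))^(5*j+2))| *
      |∏ j ∈ Finset.range n, (1 - (1/(q:ℝ))^(5*j+3))| ≤ 4 :=
    le_trans (mul_le_mul hP2 hR2 (abs_nonneg _) (by norm_num)) (by norm_num)
  calc |∏ j ∈ Finset.range (n+1), (1 - (1/(q:ℝ))^(5*j+2))| *
        |∏ j ∈ Finset.range n, (1 - (1/(q:ℝ))^(5*j+3))| * |(q:ℝ)|^(5*n^2+5*n+2)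
      ≤ 4 * |(q:ℝ)|^(5*n^2+5*n+2) := mul_le_mul_of_nonneg_right hAB h1

theorem mock_theta_Psi_irrational' (q : ℤ) (hq : 2 ≤ |q|) :
    Irrational (-1 + ∑' n : ℕ, psiTerm q n) := by
  by_contra hcon
  rw [Irrational] at hcon
  obtain ⟨r, hr⟩ := not_not.mp hcon
  obtain ⟨ht0, ht⟩ := t_facts q hq
  set T := ∑' n : ℕ, psiTerm q n with hTdef
  set s : ℚ := 1 + r with hsdef
  have hTs : T = (s : ℝ) := by rw [hsdef]; push_cast; linarith [hr]
  have hdpos : 0 < s.den := s.den_pos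
  have hden0 : ((s.den : ℤ) : ℝ) ≠ 0 := by
    have : (s.den : ℝ) ≠ 0 := Nat.cast_ne_zero.mpr s.den_ne_zero
    exact_mod_cast this
  have hT : ((s.den : ℤ) : ℝ) * T = ((s.num : ℤ) : ℝ) := by
    rw [hTs, Rat.cast_def]
    field_simp
    push_cast; ring
  obtain ⟨n, hn⟩ := pow_unbounded_of_one_lt (32 * ((s.den:ℤ):ℝ)) (one_lt_two)
  obtain ⟨N, hN⟩ := partial_sum_int q hq n
  set S := ∑ k ∈ Finset.range (n+1), psiTerm q k with hSdef
  have htail : T - S = ∑' k : ℕ, psiTerm q (k + (n+1)) := by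
    have h := Summable.sum_add_tsum_nat_add (f := psiTerm q) (n+1) (psiTerm_summable q hq)
    rw [hSdef, hTdef]
    linarith [h]
  set z : ℤ := s.num * psiD q n - (s.den : ℤ) * N with hzdef
  have hz : (z : ℝ) = ((s.den:ℤ):ℝ) * (psiD q n : ℝ) * (T - S) := by
    have hzz : (z:ℝ) = ((s.num:ℤ):ℝ) * (psiD q n:ℝ) - ((s.den:ℤ):ℝ) * (N:ℝ) := by
      rw [hzdef]; push_cast; ring
    rw [hzz, ← hT, hN]
    ring
  -- tail nonzero
  have htail_lo := psiTail_lower q hq n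
  have htail_hi := psiTail_upper q hq (n+1)
  have htpos : (0:ℝ) < (1/8) * |1/(q:ℝ)|^(5*(n+1)^2) := by positivity
  have htail_ne : T - S ≠ 0 := by
    rw [htail]
    intro h
    rw [h, abs_zero] at htail_lo
    linarith
  have hz_ne : z ≠ 0 := by
    rw [← Int.cast_ne_zero (α := ℝ), hz]
    exact mul_ne_zero (mul_ne_zero hden0 (Int.cast_ne_zero.mpr (psiD_ne_zero q hq n))) htail_ne
  -- size bound
  have hDle := psiD_abs_le q hq n
  have hqt : |1/(q:ℝ)| * |(q:ℝ)| = 1 := by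
    rw [← abs_mul]
    have hq0 : (q:ℝ) ≠ 0 := by
      have h2 := q_real q hq; intro h; rw [h] at h2; simp at h2; linarith
    rw [one_div, inv_mul_cancel₀ hq0, abs_one]
  have hsplitpow : |1/(q:ℝ)|^(5*(n+1)^2)
      = |1/(q:ℝ)|^(5*n^2+5*n+2) * |1/(q:ℝ)|^(5*n+3) := by
    rw [← pow_add]
    congr 1
    ring
  have hcomb : |(q:ℝ)|^(5*n^2+5*n+2) * |1/(q:ℝ)|^(5*(n+1)^2) = |1/(q:ℝ)|^(5*n+3) := by
    calc |(q:ℝ)|^(5*n^2+5*n+2) * |1/(q:ℝ)|^(5*(n+1)^2)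
        = (|1/(q:ℝ)| * |(q:ℝ)|)^(5*n^2+5*n+2) * |1/(q:ℝ)|^(5*n+3) := by
          rw [hsplitpow, mul_pow]; ring
      _ = |1/(q:ℝ)|^(5*n+3) := by rw [hqt, one_pow, one_mul]
  have hsden_pos : (0:ℝ) < ((s.den:ℤ):ℝ) := by exact_mod_cast hdpos
  have hx1 : |1/(q:ℝ)|^(5*n+3) ≤ (1/2:ℝ)^n := by
    calc |1/(q:ℝ)|^(5*n+3) ≤ (1/2:ℝ)^(5*n+3) := pow_le_pow_left₀ ht0.le ht _
      _ ≤ (1/2:ℝ)^n := pow_le_pow_of_le_one (by norm_num) (by norm_num) (by omega)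
  have hb1 : |(psiD q n : ℝ)| * |∑' k : ℕ, psiTerm q (k + (n+1))|
      ≤ (4 * |(q:ℝ)|^(5*n^2+5*n+2)) * (8 * |1/(q:ℝ)|^(5*(n+1)^2)) :=
    mul_le_mul hDle htail_hi (abs_nonneg _) (by positivity)
  have hstep : |(psiD q n : ℝ)| * |∑' k : ℕ, psiTerm q (k + (n+1))| ≤ 32 * (1/2:ℝ)^n := by
    calc |(psiD q n : ℝ)| * |∑' k : ℕ, psiTerm q (k + (n+1))|
        ≤ (4 * |(q:ℝ)|^(5*n^2+5*n+2)) * (8 * |1/(q:ℝ)|^(5*(n+1)^2)) := hb1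
      _ = 32 * (|(q:ℝ)|^(5*n^2+5*n+2) * |1/(q:ℝ)|^(5*(n+1)^2)) := by ring
      _ = 32 * |1/(q:ℝ)|^(5*n+3) := by rw [hcomb]
      _ ≤ 32 * (1/2:ℝ)^n := by linarith
  have habs_z : |(z:ℝ)| < 1 := by
    rw [hz, abs_mul, abs_mul, htail, abs_of_pos hsden_pos]
    calc ((s.den:ℤ):ℝ) * |(psiD q n : ℝ)| * |∑' k : ℕ, psiTerm q (k + (n+1))|
        = ((s.den:ℤ):ℝ) * (|(psiD q n : ℝ)| * |∑' k : ℕ, psiTerm q (k + (n+1))|) := by ring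
      _ ≤ ((s.den:ℤ):ℝ) * (32 * (1/2:ℝ)^n) := mul_le_mul_of_nonneg_left hstep hsden_pos.le
      _ = (32 * ((s.den:ℤ):ℝ)) / (2:ℝ)^n := by
          rw [one_div, inv_pow, div_eq_mul_inv]; ring
      _ < 1 := by
          rw [div_lt_one (by positivity : (0:ℝ) < (2:ℝ)^n)]
          exact hn
  have hge : (1:ℝ) ≤ |(z:ℝ)| := by
    rw [← Int.cast_abs]
    exact_mod_cast Int.one_le_abs hz_ne
  linarith

/-- The fifth-order mock theta function
`Ψ(x) = -1 + Σ_{n=0}^∞ x^{5n²} / ((x²; x⁵)_{n+1} (x³; x⁵)_n)`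
takes an irrational value at `x = 1/q` for every integer `q` with `|q| ≥ 2`. -/
theorem mock_theta_Psi_irrational (q : ℤ) (hq : 2 ≤ |q|) :
    Irrational (-1 + ∑' n : ℕ,
      (1 / (q : ℝ)) ^ (5 * n ^ 2) /
        ((∏ j ∈ Finset.range (n + 1), (1 - (1 / (q : ℝ)) ^ (5 * j + 2))) *
          ∏ j ∈ Finset.range n, (1 - (1 / (q : ℝ)) ^ (5 * j + 3)))) := by
  exact mock_theta_Psi_irrational' q hq
end

section
/- Let (aₙ) and (bₙ) be sequences of integers with aₙ ≥ 2 and |bₙ| ≤ aₙ − 1 for all n, such that for every index i there exist m > i and n > i with b_m · b_n < 0 (the bₙ take both signs infinitely often). Suppose there is a subsequence of indices (iₙ) along which a_{iₙ} → ∞ and b_{iₙ}/a_{iₙ} → 0 as n → ∞. Then the Cantor series S = Σ_{n=1}^∞ bₙ/(a₁a₂⋯aₙ) converges to an irrational real number. -/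
open Filter Finset

namespace CantorOpp

variable (a b : ℕ → ℤ)

/-- product of `a (N+k)` for `k < n` -/
noncomputable def P (N n : ℕ) : ℝ := ∏ k ∈ Finset.range n, (a (N + k) : ℝ)

noncomputable def t (N n : ℕ) : ℝ := (b (N + n) : ℝ) / P a N (n + 1)

noncomputable def u (N n : ℕ) : ℝ := ((a (N + n) : ℝ) - 1) / P a N (n + 1)

noncomputable def R (N : ℕ) : ℝ := ∑' n, t a b N n

variable {a b}

section basic

variable (ha : ∀ n, 2 ≤ a n) (hb : ∀ n, |b n| ≤ a n - 1)
include ha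

lemma ha2 (k : ℕ) : (2 : ℝ) ≤ (a k : ℝ) := by exact_mod_cast ha k

lemma P_pos (N n : ℕ) : 0 < P a N n := by
  apply Finset.prod_pos
  intro k _
  linarith [ha2 ha (N + k)]

omit ha in
lemma P_succ (N n : ℕ) : P a N (n + 1) = P a N n * (a (N + n) : ℝ) :=
  Finset.prod_range_succ _ _

lemma two_pow_le_P (N n : ℕ) : (2 : ℝ) ^ n ≤ P a N n := by
  induction n with
  | zero => simp [P]
  | succ n ih =>
      rw [P_succ, pow_succ]
      have h1 : (0:ℝ) < 2 ^ n := by positivity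
      have := ha2 ha (N + n)
      nlinarith [P_pos ha N n]

lemma u_nonneg (N n : ℕ) : 0 ≤ u a N n := by
  apply div_nonneg _ (P_pos ha N (n + 1)).le
  linarith [ha2 ha (N + n)]

lemma u_eq (N n : ℕ) : u a N n = 1 / P a N n - 1 / P a N (n + 1) := by
  rw [u, P_succ]
  have h1 := (P_pos ha N n).ne'
  have h2 : (a (N + n) : ℝ) ≠ 0 := by linarith [ha2 ha (N + n)]
  field_simp

lemma sum_u (N M : ℕ) : ∑ n ∈ Finset.range M, u a N n = 1 - 1 / P a N M := by
  have : ∀ n ∈ Finset.range M, u a N n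
      = (fun m => 1 / P a N m) n - (fun m => 1 / P a N m) (n + 1) := by
    intro n _; exact u_eq ha N n
  rw [Finset.sum_congr rfl this, Finset.sum_range_sub' (fun m => 1 / P a N m) M]
  simp [P]

lemma inv_P_le (N n : ℕ) : 1 / P a N n ≤ (1 / 2 : ℝ) ^ n := by
  rw [div_pow, one_pow]
  exact one_div_le_one_div_of_le (by positivity) (two_pow_le_P ha N n)

lemma u_le_geom (N n : ℕ) : u a N n ≤ (1 / 2 : ℝ) ^ n := by
  have h := u_eq ha N n
  have h2 : 0 ≤ 1 / P a N (n + 1) := le_of_lt (div_pos one_pos (P_pos ha N (n + 1)))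
  have := inv_P_le ha N n
  linarith

lemma summable_u (N : ℕ) : Summable (u a N) :=
  Summable.of_nonneg_of_le (u_nonneg ha N) (u_le_geom ha N) summable_geometric_two

lemma hasSum_u (N : ℕ) : HasSum (u a N) 1 := by
  have hs := (summable_u ha N).hasSum
  have h1 : Tendsto (fun M => ∑ n ∈ Finset.range M, u a N n) atTop (nhds (∑' n, u a N n)) :=
    hs.tendsto_sum_nat
  have h2 : Tendsto (fun M => ∑ n ∈ Finset.range M, u a N n) atTop (nhds 1) := by
    simp only [sum_u ha N]
    have h3 : Tendsto (fun M => 1 / P a N M) atTop (nhds 0) :=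
      squeeze_zero (fun M => le_of_lt (div_pos one_pos (P_pos ha N M))) (inv_P_le ha N)
        (tendsto_pow_atTop_nhds_zero_of_lt_one (by norm_num) (by norm_num))
    simpa using tendsto_const_nhds.sub h3
  have := tendsto_nhds_unique h1 h2
  rwa [this] at hs

include hb

lemma abs_t_le (N n : ℕ) : |t a b N n| ≤ u a N n := by
  rw [t, u, abs_div, abs_of_pos (P_pos ha N (n + 1))]
  have hbb : |(b (N + n) : ℝ)| ≤ (a (N + n) : ℝ) - 1 := by
    have := hb (N + n)
    have : ((|b (N + n)| : ℤ) : ℝ) ≤ ((a (N + n) - 1 : ℤ) : ℝ) := by exact_mod_cast this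
    push_cast at this
    simpa using this
  exact (div_le_div_iff_of_pos_right (P_pos ha N (n + 1))).mpr hbb

lemma summable_abs_t (N : ℕ) : Summable (fun n => |t a b N n|) :=
  Summable.of_nonneg_of_le (fun n => abs_nonneg _) (abs_t_le ha hb N) (summable_u ha N)

lemma summable_t (N : ℕ) : Summable (t a b N) :=
  (summable_abs_t ha hb N).of_abs

lemma hasSum_t (N : ℕ) : HasSum (t a b N) (R a b N) := (summable_t ha hb N).hasSum

lemma abs_R_le_one (N : ℕ) : |R a b N| ≤ 1 := by
  have h1 : |R a b N| ≤ ∑' n, |t a b N n| := by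
    simpa [R, Real.norm_eq_abs] using norm_tsum_le_tsum_norm (f := t a b N)
      (by simpa [Real.norm_eq_abs] using summable_abs_t ha hb N)
  have h2 : ∑' n, |t a b N n| ≤ ∑' n, u a N n :=
    Summable.tsum_le_tsum (abs_t_le ha hb N) (summable_abs_t ha hb N) (summable_u ha N)
  rw [(hasSum_u ha N).tsum_eq] at h2
  linarith

omit ha hb in
lemma t_zero (N : ℕ) : t a b N 0 = (b N : ℝ) / (a N : ℝ) := by
  simp [t, P]

omit hb in
lemma t_succ (N n : ℕ) : t a b N (n + 1) = (a N : ℝ)⁻¹ * t a b (N + 1) n := by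
  have hprod : ∀ k ∈ Finset.range (n + 1), (a (N + (k + 1)) : ℝ) = (a (N + 1 + k) : ℝ) := by
    intro k _
    congr 2
    omega
  have hP : P a N (n + 2) = (a N : ℝ) * P a (N + 1) (n + 1) := by
    rw [P, Finset.prod_range_succ' (fun k => (a (N + k) : ℝ)) (n + 1),
      Finset.prod_congr rfl hprod, mul_comm]
    rfl
  have hb' : b (N + (n + 1)) = b ((N + 1) + n) := by congr 1; omega
  rw [t, t, hP, hb']
  have h1 : (a N : ℝ) ≠ 0 := by linarith [ha2 ha N]
  have h2 := (P_pos ha (N + 1) (n + 1)).ne'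
  field_simp

lemma R_rec (N : ℕ) : (a N : ℝ) * R a b N = (b N : ℝ) + R a b (N + 1) := by
  have h0 : R a b N = t a b N 0 + ∑' n, t a b N (n + 1) :=
    Summable.tsum_eq_zero_add (summable_t ha hb N)
  have h1 : ∑' n, t a b N (n + 1) = (a N : ℝ)⁻¹ * R a b (N + 1) := by
    rw [tsum_congr (t_succ ha N), tsum_mul_left]
    rfl
  have h2 : (a N : ℝ) ≠ 0 := by linarith [ha2 ha N]
  rw [h0, h1, t_zero]
  field_simp

lemma extremal_neg_one (N : ℕ) (hR : R a b N = -1) (n : ℕ) :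
    (b (N + n) : ℝ) = -((a (N + n) : ℝ) - 1) := by
  have hs : HasSum (fun n => u a N n + t a b N n) 0 := by
    have := (hasSum_u ha N).add (hasSum_t ha hb N)
    rwa [hR, add_neg_cancel] at this
  have hnn : ∀ n, 0 ≤ u a N n + t a b N n := by
    intro n
    have := abs_t_le ha hb N n
    have := neg_abs_le (t a b N n)
    linarith
  have := (hasSum_zero_iff_of_nonneg hnn).mp hs
  have h0 : u a N n + t a b N n = 0 := by simpa using congrFun this n
  rw [u, t, ← add_div, div_eq_zero_iff] at h0
  rcases h0 with h0 | h0
  · linarith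
  · exact absurd h0 (P_pos ha N (n + 1)).ne'

lemma extremal_one (N : ℕ) (hR : R a b N = 1) (n : ℕ) :
    (b (N + n) : ℝ) = (a (N + n) : ℝ) - 1 := by
  have hs : HasSum (fun n => u a N n - t a b N n) 0 := by
    have := (hasSum_u ha N).sub (hasSum_t ha hb N)
    rwa [hR, sub_self] at this
  have hnn : ∀ n, 0 ≤ u a N n - t a b N n := by
    intro n
    have := abs_t_le ha hb N n
    have := le_abs_self (t a b N n)
    linarith
  have := (hasSum_zero_iff_of_nonneg hnn).mp hs
  have h0 : u a N n - t a b N n = 0 := by simpa using congrFun this n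
  rw [u, t, div_sub_div_same, div_eq_zero_iff] at h0
  rcases h0 with h0 | h0
  · linarith
  · exact absurd h0 (P_pos ha N (n + 1)).ne'

lemma step (hsign : ∀ i : ℕ, ∃ m > i, ∃ n > i, b m * b n < 0)
    (m : ℕ) (hR : R a b m = 0) : b m = 0 ∧ R a b (m + 1) = 0 := by
  have hrec := R_rec ha hb m
  rw [hR, mul_zero] at hrec
  have hR1 : R a b (m + 1) = -(b m : ℝ) := by linarith
  have habs : |(b m : ℝ)| ≤ 1 := by
    have := abs_R_le_one ha hb (m + 1)
    rw [hR1, abs_neg] at this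
    exact this
  have hbm : b m = -1 ∨ b m = 0 ∨ b m = 1 := by
    have : |b m| ≤ 1 := by exact_mod_cast habs
    have := abs_le.mp this
    omega
  rcases hbm with h | h | h
  · -- b m = -1, R (m+1) = 1, all later b positive
    exfalso
    have hR1' : R a b (m + 1) = 1 := by rw [hR1, h]; norm_num
    have hpos : ∀ k, 0 < b (m + 1 + k) := by
      intro k
      have := extremal_one ha hb (m + 1) hR1' k
      have h2 := ha (m + 1 + k)
      have h3 : (0 : ℝ) < (b (m + 1 + k) : ℝ) := by
        rw [this]
        have := ha2 ha (m + 1 + k)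
        linarith
      exact_mod_cast h3
    obtain ⟨j, hj, k, hk, hjk⟩ := hsign (m + 1)
    have h1 : 0 < b j := by
      have : b j = b (m + 1 + (j - (m + 1))) := by congr 1; omega
      rw [this]; exact hpos _
    have h2 : 0 < b k := by
      have : b k = b (m + 1 + (k - (m + 1))) := by congr 1; omega
      rw [this]; exact hpos _
    have := mul_pos h1 h2
    linarith
  · constructor
    · exact h
    · rw [hR1, h]; norm_num
  · -- b m = 1, R (m+1) = -1, all later b negative
    exfalso
    have hR1' : R a b (m + 1) = -1 := by rw [hR1, h]; norm_num
    have hneg : ∀ k, b (m + 1 + k) < 0 := by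
      intro k
      have := extremal_neg_one ha hb (m + 1) hR1' k
      have h3 : (b (m + 1 + k) : ℝ) < 0 := by
        rw [this]
        have := ha2 ha (m + 1 + k)
        linarith
      exact_mod_cast h3
    obtain ⟨j, hj, k, hk, hjk⟩ := hsign (m + 1)
    have h1 : b j < 0 := by
      have : b j = b (m + 1 + (j - (m + 1))) := by congr 1; omega
      rw [this]; exact hneg _
    have h2 : b k < 0 := by
      have : b k = b (m + 1 + (k - (m + 1))) := by congr 1; omega
      rw [this]; exact hneg _
    have := mul_pos_of_neg_of_neg h1 h2
    linarith

lemma zero_prop (hsign : ∀ i : ℕ, ∃ m > i, ∃ n > i, b m * b n < 0)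
    (N : ℕ) (hR : R a b N = 0) : ∀ n, b (N + n) = 0 := by
  have key : ∀ n, R a b (N + n) = 0 := by
    intro n
    induction n with
    | zero => exact hR
    | succ n ih => exact (step ha hb hsign (N + n) ih).2
  intro n
  exact (step ha hb hsign (N + n) (key n)).1

end basic

theorem main (a b : ℕ → ℤ)
    (ha : ∀ n, 2 ≤ a n) (hb : ∀ n, |b n| ≤ a n - 1)
    (hsign : ∀ i : ℕ, ∃ m > i, ∃ n > i, b m * b n < 0)
    (i : ℕ → ℕ) (hi : StrictMono i)
    (hia : Filter.Tendsto (fun n => (a (i n) : ℝ)) Filter.atTop Filter.atTop)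
    (hib : Filter.Tendsto (fun n => (b (i n) : ℝ) / (a (i n) : ℝ))
      Filter.atTop (nhds 0)) :
    ∃ S : ℝ, HasSum (fun n : ℕ =>
        (b n : ℝ) / ∏ k ∈ Finset.range (n + 1), (a k : ℝ)) S ∧
      Irrational S := by
  have hfe : (fun n : ℕ => (b n : ℝ) / ∏ k ∈ Finset.range (n + 1), (a k : ℝ)) = t a b 0 := by
    funext n
    simp [t, P]
  refine ⟨R a b 0, ?_, ?_⟩
  · rw [hfe]
    exact hasSum_t ha hb 0
  · intro hS
    obtain ⟨r, hr⟩ := hS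
    have hPN : ∀ N : ℕ, (0:ℝ) < ∏ k ∈ Finset.range N, (a k : ℝ) := by
      intro N
      apply Finset.prod_pos
      intro k _
      linarith [ha2 ha k]
    -- integrality of den * R N
    have key : ∀ N : ℕ, ∃ z : ℤ, (z : ℝ) = (r.den : ℝ) * R a b N := by
      intro N
      set PN : ℝ := ∏ k ∈ Finset.range N, (a k : ℝ) with hPNdef
      have step1 : ∀ n : ℕ, t a b N n = PN * t a b 0 (N + n) := by
        intro n
        have e1 : P a 0 (N + n + 1) = PN * P a N (n + 1) := by
          rw [P, P, hPNdef]
          have e2 : ∀ k ∈ Finset.range (N + n + 1), (a (0 + k) : ℝ) = (a k : ℝ) := by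
            intro k _
            norm_num
          rw [Finset.prod_congr rfl e2,
            ← Finset.prod_range_mul_prod_Ico (fun k => (a k : ℝ)) (by omega : N ≤ N + n + 1),
            Finset.prod_Ico_eq_prod_range]
          have e3 : N + n + 1 - N = n + 1 := by omega
          rw [e3]
        rw [t, t, e1]
        have e4 : b (0 + (N + n)) = b (N + n) := by norm_num
        rw [e4]
        have h1 := (P_pos ha N (n + 1)).ne'
        have h2 := (hPN N).ne'
        rw [← hPNdef] at h2
        field_simp
      have step2 : R a b N = PN * (R a b 0 - ∑ n ∈ Finset.range N, t a b 0 n) := by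
        have h3 := Summable.sum_add_tsum_nat_add (f := t a b 0) N (summable_t ha hb 0)
        have h4 : ∑' (k : ℕ), t a b 0 (k + N) = ∑' (k : ℕ), t a b 0 (N + k) :=
          tsum_congr fun k => by rw [add_comm]
        have h5 : R a b N = PN * ∑' n, t a b 0 (N + n) := by
          rw [R, tsum_congr step1, tsum_mul_left]
        rw [h5, ← h4]
        have h6 : ∑' (k : ℕ), t a b 0 (k + N) = R a b 0 - ∑ n ∈ Finset.range N, t a b 0 n := by
          rw [R]
          linarith [h3]
        rw [h6]
      have step3 : PN * ∑ n ∈ Finset.range N, t a b 0 n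
          = ((∑ n ∈ Finset.range N, b n * ∏ k ∈ Finset.Ico (n + 1) N, a k : ℤ) : ℝ) := by
        rw [Finset.mul_sum]
        push_cast
        apply Finset.sum_congr rfl
        intro n hn
        have hnN : n + 1 ≤ N := Finset.mem_range.mp hn
        have e1 : t a b 0 n = (b n : ℝ) / ∏ k ∈ Finset.range (n + 1), (a k : ℝ) :=
          (congrFun hfe n).symm
        have e2 : PN = (∏ k ∈ Finset.range (n + 1), (a k : ℝ)) * ∏ k ∈ Finset.Ico (n + 1) N, (a k : ℝ) := by
          rw [hPNdef, Finset.prod_range_mul_prod_Ico (fun k => (a k : ℝ)) hnN]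
        have h1 : (0:ℝ) < ∏ k ∈ Finset.range (n + 1), (a k : ℝ) := hPN (n + 1)
        rw [e1, e2]
        field_simp
      have hden : (r.den : ℝ) * R a b 0 = (r.num : ℝ) := by
        rw [← hr, mul_comm]
        have h := congrArg (fun q : ℚ => (q : ℝ)) (Rat.mul_den_eq_num r)
        push_cast at h
        exact h
      refine ⟨r.num * ∏ k ∈ Finset.range N, a k
        - r.den * ∑ n ∈ Finset.range N, b n * ∏ k ∈ Finset.Ico (n + 1) N, a k, ?_⟩
      have hc : ((∏ k ∈ Finset.range N, a k : ℤ) : ℝ) = PN := by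
        rw [hPNdef]
        push_cast
        rfl
      rw [Int.cast_sub, Int.cast_mul, Int.cast_mul, hc, ← step3, step2]
      push_cast
      rw [← hden]
      ring
    -- R (i n) tends to 0
    have hbound : ∀ n : ℕ, |R a b (i n)|
        ≤ |(b (i n) : ℝ) / (a (i n) : ℝ)| + ((a (i n) : ℝ))⁻¹ := by
      intro n
      set m := i n with hm
      have hrec := R_rec ha hb m
      have ha0 : (0:ℝ) < (a m : ℝ) := by linarith [ha2 ha m]
      have hR1 := abs_R_le_one ha hb (m + 1)
      have hsplit : R a b m = (b m : ℝ) / (a m : ℝ) + R a b (m + 1) * ((a m : ℝ))⁻¹ := by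
        field_simp
        linarith
      have h5 : |R a b (m + 1) * ((a m : ℝ))⁻¹| ≤ ((a m : ℝ))⁻¹ := by
        rw [abs_mul, abs_inv, abs_of_pos ha0]
        have hinv : (0:ℝ) ≤ ((a m : ℝ))⁻¹ := by positivity
        nlinarith
      calc |R a b m| = |(b m : ℝ) / (a m : ℝ) + R a b (m + 1) * ((a m : ℝ))⁻¹| := by rw [← hsplit]
        _ ≤ |(b m : ℝ) / (a m : ℝ)| + |R a b (m + 1) * ((a m : ℝ))⁻¹| := abs_add_le _ _
        _ ≤ |(b m : ℝ) / (a m : ℝ)| + ((a m : ℝ))⁻¹ := by linarith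
    have hg : Filter.Tendsto (fun n => |(b (i n) : ℝ) / (a (i n) : ℝ)| + ((a (i n) : ℝ))⁻¹)
        Filter.atTop (nhds 0) := by
      have h1 : Filter.Tendsto (fun n => |(b (i n) : ℝ) / (a (i n) : ℝ)|) Filter.atTop (nhds 0) := by
        simpa using hib.abs
      have h2 : Filter.Tendsto (fun n => ((a (i n) : ℝ))⁻¹) Filter.atTop (nhds 0) :=
        hia.inv_tendsto_atTop
      simpa using h1.add h2
    have hR0 : Filter.Tendsto (fun n => R a b (i n)) Filter.atTop (nhds 0) :=
      squeeze_zero_norm (fun n => by simpa [Real.norm_eq_abs] using hbound n) hg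
    have hq : Filter.Tendsto (fun n => (r.den : ℝ) * R a b (i n)) Filter.atTop (nhds 0) := by
      simpa using hR0.const_mul (r.den : ℝ)
    have hev : ∀ᶠ n in Filter.atTop, |(r.den : ℝ) * R a b (i n)| < 1 := by
      have := hq.abs
      simp only [abs_zero] at this
      exact this.eventually_lt_const one_pos
    obtain ⟨n₀, hn₀⟩ := hev.exists
    obtain ⟨z, hz⟩ := key (i n₀)
    have hz0 : z = 0 := by
      have : |(z : ℝ)| < 1 := by rw [hz]; exact hn₀
      have h2 : |z| < 1 := by exact_mod_cast this
      have := abs_le.mp (by omega : |z| ≤ 0)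
      omega
    have hden0 : (r.den : ℝ) ≠ 0 := by
      have := r.den_pos
      positivity
    have hRzero : R a b (i n₀) = 0 := by
      have : (r.den : ℝ) * R a b (i n₀) = 0 := by rw [← hz, hz0]; norm_num
      exact (mul_eq_zero.mp this).resolve_left hden0
    have hall := zero_prop ha hb hsign (i n₀) hRzero
    obtain ⟨j, hj, k, hk, hjk⟩ := hsign (i n₀)
    have : b j = 0 := by
      have h1 : b j = b (i n₀ + (j - i n₀)) := by congr 1; omega
      rw [h1]
      exact hall _
    rw [this, zero_mul] at hjk
    exact absurd hjk (lt_irrefl 0)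

end CantorOpp

/-- Oppenheim's irrationality criterion for Cantor series whose numerators take
both signs infinitely often: if `aₙ ≥ 2`, `|bₙ| ≤ aₙ - 1`, the `bₙ` take both
signs beyond every index, and there is a subsequence along which `aₙ → ∞` and
`bₙ/aₙ → 0`, then `S = Σ bₙ/(a₁a₂⋯aₙ)` converges to an irrational number. -/
theorem cantor_series_oppenheim_irrational (a b : ℕ → ℤ)
    (ha : ∀ n, 2 ≤ a n) (hb : ∀ n, |b n| ≤ a n - 1)
    (hsign : ∀ i : ℕ, ∃ m > i, ∃ n > i, b m * b n < 0)
    (i : ℕ → ℕ) (hi : StrictMono i)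
    (hia : Filter.Tendsto (fun n => (a (i n) : ℝ)) Filter.atTop Filter.atTop)
    (hib : Filter.Tendsto (fun n => (b (i n) : ℝ) / (a (i n) : ℝ))
      Filter.atTop (nhds 0)) :
    ∃ S : ℝ, HasSum (fun n : ℕ =>
        (b n : ℝ) / ∏ k ∈ Finset.range (n + 1), (a k : ℝ)) S ∧
      Irrational S := by
  exact CantorOpp.main a b ha hb hsign i hi hia hib
end
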